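/- arXiv:1401.4851 — 3 statements merged into one kernel-verified Lean document; each statement's English description precedes it below -/
import Mathlib

section
/- For d ≥ 4, let G be a connected multigraph with m edges satisfying Δ(G) ≤ d. Then α'(G) ≥ m/⌊3d/2⌋, and equality holds if and only if m = 0 or G is a Shannon multigraph of degree d. -/
/-!
Induction on the number of vertices, with `⌊3d/2⌋ = d + ⌊d/2⌋`. If some vertex is covered by
every maximum matching, deleting it lowers `α'` by one and removes at most `d` edges. A
disconnected multigraph splits along a component. In the remaining case `G` is connected and
every vertex is missed by some maximum matching; then, by Gallai's lemma, every maximum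
matching misses at most one vertex (two missed vertices at minimal distance are ruled out by
swapping a maximum matching along an alternating path), so `2m ≤ d (2α' + 1)`, i.e.
`m ≤ d α' + ⌊d/2⌋ ≤ ⌊3d/2⌋ α'`. Equality survives only in this last case with `α' = 1`
on three vertices, where the degree bound forces the Shannon multiplicities.
-/

/-- A multigraph: a finite vertex set together with symmetric, loopless
edge multiplicities supported on the vertex set. -/
structure Multigraph (V : Type*) where
  verts : Finset V
  mult : V → V → ℕ
  symm : ∀ u v, mult u v = mult v u
  loopless : ∀ v, mult v v = 0
  supp : ∀ u v, mult u v ≠ 0 → u ∈ verts ∧ v ∈ verts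

namespace Multigraph

variable {V : Type*}

/-- The number of edges of `G` (counted with multiplicity). -/
def edgeCount (G : Multigraph V) : ℕ :=
  (∑ u ∈ G.verts, ∑ v ∈ G.verts, G.mult u v) / 2

/-- The degree of a vertex: the sum of the multiplicities of edges at it. -/
def degree (G : Multigraph V) (v : V) : ℕ :=
  ∑ u ∈ G.verts, G.mult v u

/-- The maximum degree `Δ(G)`. -/
def maxDegree (G : Multigraph V) : ℕ :=
  G.verts.sup G.degree

/-- A matching: a set of edges (each recorded as an ordered pair of its
endpoints, present in the multigraph) that pairwise share no endpoint. -/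
def IsMatching (G : Multigraph V) (M : Finset (V × V)) : Prop :=
  (∀ p ∈ M, 0 < G.mult p.1 p.2) ∧
    ∀ p ∈ M, ∀ q ∈ M, p ≠ q →
      p.1 ≠ q.1 ∧ p.1 ≠ q.2 ∧ p.2 ≠ q.1 ∧ p.2 ≠ q.2

/-- The matching number `α'(G)`: the maximum size of a matching. -/
noncomputable def matchingNumber (G : Multigraph V) : ℕ :=
  sSup {n | ∃ M : Finset (V × V), G.IsMatching M ∧ M.card = n}

/-- `G` is connected if every pair of vertices is joined by a path. -/
def Connected (G : Multigraph V) : Prop :=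
  ∀ u ∈ G.verts, ∀ v ∈ G.verts,
    Relation.ReflTransGen (fun a b => 0 < G.mult a b) u v

/-- `G` is a Shannon multigraph of degree `d`: three vertices `x, y, z` with
`μ(xy) = μ(xz) = ⌊d/2⌋` and `μ(yz) = ⌈d/2⌉`. -/
def IsShannon [DecidableEq V] (G : Multigraph V) (d : ℕ) : Prop :=
  ∃ x y z : V, x ≠ y ∧ x ≠ z ∧ y ≠ z ∧ G.verts = {x, y, z} ∧
    G.mult x y = d / 2 ∧ G.mult x z = d / 2 ∧ G.mult y z = (d + 1) / 2

/-- A proper edge coloring of `G` with colors from `Fin c`: each pair of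
vertices receives a set of colors of size equal to its multiplicity (one color
per parallel edge, so parallel edges get distinct colors), symmetrically, and
edges sharing an endpoint get disjoint color sets. -/
def IsProperEdgeColoring (G : Multigraph V) {c : ℕ}
    (f : V → V → Finset (Fin c)) : Prop :=
  (∀ u v, f u v = f v u) ∧ (∀ u v, (f u v).card = G.mult u v) ∧
    ∀ u v w, v ≠ w → Disjoint (f u v) (f u w)

/-- The chromatic index `χ'(G)`: minimum number of colors in a proper edge
coloring. -/
noncomputable def chromaticIndex (G : Multigraph V) : ℕ :=
  sInf {c | ∃ f : V → V → Finset (Fin c), G.IsProperEdgeColoring f}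

/-- The number of edges of `G` receiving color `i` in the coloring `f`. -/
def colorClassSize (G : Multigraph V) {c : ℕ}
    (f : V → V → Finset (Fin c)) (i : Fin c) : ℕ :=
  (∑ u ∈ G.verts, ∑ v ∈ G.verts, if i ∈ f u v then 1 else 0) / 2

end Multigraph

namespace Multigraph

variable {V : Type*} {G : Multigraph V} {M N K : Finset (V × V)}

def Adj (G : Multigraph V) (a b : V) : Prop := 0 < G.mult a b

lemma Adj.symm {a b : V} (h : G.Adj a b) : G.Adj b a := by
  rwa [Adj, G.symm]

lemma Adj.ne {a b : V} (h : G.Adj a b) : a ≠ b := by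
  rintro rfl
  simp [Adj, G.loopless] at h

lemma Adj.mem_left {a b : V} (h : G.Adj a b) : a ∈ G.verts := (G.supp a b h.ne').1

lemma Adj.mem_right {a b : V} (h : G.Adj a b) : b ∈ G.verts := (G.supp a b h.ne').2

lemma degree_le_of_maxDegree_le {d : ℕ} (hΔ : G.maxDegree ≤ d) {v : V} (hv : v ∈ G.verts) :
    G.degree v ≤ d :=
  (Finset.le_sup hv).trans hΔ

def Incident (p : V × V) (v : V) : Prop := v = p.1 ∨ v = p.2

def Covers (M : Finset (V × V)) (v : V) : Prop := ∃ p ∈ M, Incident p v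

lemma Covers.mono {M' : Finset (V × V)} (h : M ⊆ M') {v : V} (hv : Covers M v) :
    Covers M' v :=
  let ⟨p, hp, hvp⟩ := hv; ⟨p, h hp, hvp⟩

lemma isMatching_iff_incident :
    G.IsMatching M ↔ (∀ p ∈ M, G.Adj p.1 p.2) ∧
      ∀ p ∈ M, ∀ q ∈ M, ∀ v, Incident p v → Incident q v → p = q := by
  refine and_congr Iff.rfl (forall₂_congr fun p _ => forall₂_congr fun q _ => ?_)
  constructor
  · rintro h v (rfl | rfl) (hq | hq) <;> by_contra hne <;> simp_all
  · intro h hne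
    exact ⟨fun he => hne (h _ (.inl rfl) (.inl he)), fun he => hne (h _ (.inl rfl) (.inr he)),
      fun he => hne (h _ (.inr rfl) (.inl he)), fun he => hne (h _ (.inr rfl) (.inr he))⟩

lemma IsMatching.adj (hM : G.IsMatching M) {p : V × V} (hp : p ∈ M) :
    G.Adj p.1 p.2 :=
  hM.1 p hp

lemma IsMatching.mono {M' : Finset (V × V)} (hM : G.IsMatching M') (h : M ⊆ M') :
    G.IsMatching M :=
  ⟨fun p hp => hM.1 p (h hp), fun p hp q hq => hM.2 p (h hp) q (h hq)⟩

lemma IsMatching.eq_of_incident (hM : G.IsMatching M) {p q : V × V}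
    (hp : p ∈ M) (hq : q ∈ M) {v : V} (hvp : Incident p v) (hvq : Incident q v) : p = q :=
  (isMatching_iff_incident.1 hM).2 p hp q hq v hvp hvq

lemma IsMatching.exists_adj_of_covers (hM : G.IsMatching M) {t : V}
    (ht : Covers M t) :
    ∃ p ∈ M, ∃ t', G.Adj t t' ∧ ∀ v, Incident p v ↔ v = t ∨ v = t' := by
  obtain ⟨⟨a, b⟩, hp, rfl | rfl⟩ := ht
  · exact ⟨_, hp, b, hM.adj hp, fun v => Iff.rfl⟩
  · exact ⟨_, hp, a, (hM.adj hp).symm, fun v => or_comm⟩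

def IsMaximumMatching (G : Multigraph V) (M : Finset (V × V)) : Prop :=
  G.IsMatching M ∧ ∀ K, G.IsMatching K → K.card ≤ M.card

lemma IsMaximumMatching.of_card_eq (hM : G.IsMaximumMatching M) (hK : G.IsMatching K)
    (hcard : K.card = M.card) : G.IsMaximumMatching K :=
  ⟨hK, fun L hL => hcard ▸ hM.2 L hL⟩

section DecidableEq

variable [DecidableEq V]

instance (p : V × V) : DecidablePred (Incident p) := fun v => by
  unfold Incident
  infer_instance

instance (M : Finset (V × V)) : DecidablePred (Covers M) := fun v => by
  unfold Covers
  infer_instance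

lemma covers_insert {a b v : V} :
    Covers (insert (a, b) K) v ↔ v = a ∨ v = b ∨ Covers K v := by
  simp [Covers, Incident, or_assoc]

lemma IsMatching.not_covers_erase (hM : G.IsMatching M) {p : V × V} (hp : p ∈ M) {v : V}
    (hv : Incident p v) : ¬Covers (M.erase p) v := by
  rintro ⟨q, hq, hvq⟩
  exact Finset.ne_of_mem_erase hq (hM.eq_of_incident (Finset.mem_of_mem_erase hq) hp hvq hv)

lemma covers_erase {p : V × V} {v : V} (hv : Covers M v) (hpv : ¬Incident p v) :
    Covers (M.erase p) v := by
  obtain ⟨q, hq, hvq⟩ := hv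
  exact ⟨q, Finset.mem_erase.2 ⟨by rintro rfl; exact hpv hvq, hq⟩, hvq⟩

lemma IsMatching.insert (hK : G.IsMatching K) {a b : V} (hab : G.Adj a b)
    (ha : ¬Covers K a) (hb : ¬Covers K b) : G.IsMatching (insert (a, b) K) := by
  have hnew : ∀ q ∈ K, ∀ v, Incident (a, b) v → ¬Incident q v := by
    rintro q hq v (rfl | rfl) hvq
    exacts [ha ⟨q, hq, hvq⟩, hb ⟨q, hq, hvq⟩]
  refine isMatching_iff_incident.2 ⟨fun p hp => ?_, fun p hp q hq v hvp hvq => ?_⟩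
  · rcases Finset.mem_insert.1 hp with rfl | hp
    exacts [hab, hK.adj hp]
  rcases Finset.mem_insert.1 hp with rfl | hp <;> rcases Finset.mem_insert.1 hq with rfl | hq
  · rfl
  · exact (hnew q hq v hvp hvq).elim
  · exact (hnew p hp v hvq hvp).elim
  · exact hK.eq_of_incident hp hq hvp hvq

lemma card_insert_of_not_covers {a b : V} (ha : ¬Covers K a) :
    (insert (a, b) K).card = K.card + 1 :=
  Finset.card_insert_of_notMem fun h => ha ⟨_, h, .inl rfl⟩

lemma IsMatching.card_filter_covers (hM : G.IsMatching M) :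
    (G.verts.filter (Covers M)).card = 2 * M.card := by
  have hcov : G.verts.filter (Covers M) = M.biUnion fun p => {p.1, p.2} := by
    ext v
    simp only [Finset.mem_filter, Finset.mem_biUnion, Finset.mem_insert,
      Finset.mem_singleton, Covers, Incident]
    constructor
    · exact fun h => h.2
    · rintro ⟨p, hp, rfl | rfl⟩
      exacts [⟨(hM.adj hp).mem_left, p, hp, .inl rfl⟩,
        ⟨(hM.adj hp).mem_right, p, hp, .inr rfl⟩]
  rw [hcov, Finset.card_biUnion, Finset.sum_congr rfl fun p hp => Finset.card_pair (hM.adj hp).ne,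
    Finset.sum_const, smul_eq_mul, mul_comm]
  intro p hp q hq hne
  obtain ⟨h11, h12, h21, h22⟩ := hM.2 p hp q hq hne
  simp [h11.symm, h12.symm, h21.symm, h22.symm]

end DecidableEq

lemma IsMatching.two_mul_card_le (hM : G.IsMatching M) : 2 * M.card ≤ G.verts.card := by
  classical
  exact hM.card_filter_covers ▸ Finset.card_filter_le _ _

lemma matchingNumber_bddAbove (G : Multigraph V) :
    BddAbove {n | ∃ M : Finset (V × V), G.IsMatching M ∧ M.card = n} :=
  ⟨G.verts.card, by rintro _ ⟨M, hM, rfl⟩; linarith [hM.two_mul_card_le]⟩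

lemma IsMatching.card_le_matchingNumber (hM : G.IsMatching M) : M.card ≤ G.matchingNumber :=
  le_csSup G.matchingNumber_bddAbove ⟨M, hM, rfl⟩

lemma exists_isMatching_card_eq_matchingNumber (G : Multigraph V) :
    ∃ M, G.IsMatching M ∧ M.card = G.matchingNumber :=
  Nat.sSup_mem (s := {n | ∃ M, G.IsMatching M ∧ M.card = n})
    ⟨0, ∅, ⟨by simp, by simp⟩, rfl⟩ G.matchingNumber_bddAbove

lemma exists_isMaximumMatching (G : Multigraph V) : ∃ M, G.IsMaximumMatching M := by
  obtain ⟨M, hM, hcard⟩ := G.exists_isMatching_card_eq_matchingNumber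
  exact ⟨M, hM, fun K hK => hcard ▸ hK.card_le_matchingNumber⟩

lemma IsMaximumMatching.card_eq (hM : G.IsMaximumMatching M) : M.card = G.matchingNumber := by
  obtain ⟨N, hN, hcard⟩ := G.exists_isMatching_card_eq_matchingNumber
  exact le_antisymm hM.1.card_le_matchingNumber (hcard ▸ hM.2 N hN)

lemma IsMaximumMatching.covers_of_adj (hM : G.IsMaximumMatching M) {a b : V} (hab : G.Adj a b)
    (ha : ¬Covers M a) : Covers M b := by
  classical
  by_contra hb
  have := hM.2 _ (hM.1.insert hab ha hb)
  rw [card_insert_of_not_covers ha] at this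
  omega

def induce (G : Multigraph V) (P : V → Prop) [DecidablePred P] : Multigraph V where
  verts := G.verts.filter P
  mult a b := if P a ∧ P b then G.mult a b else 0
  symm u v := by simp only [G.symm u v, and_comm]
  loopless v := by simp [G.loopless]
  supp u v h := by
    split_ifs at h with hP
    · exact ⟨Finset.mem_filter.2 ⟨(G.supp u v h).1, hP.1⟩,
        Finset.mem_filter.2 ⟨(G.supp u v h).2, hP.2⟩⟩
    · exact absurd rfl h

section Induce

variable {P : V → Prop} [DecidablePred P]

lemma adj_induce_iff {a b : V} : (G.induce P).Adj a b ↔ G.Adj a b ∧ P a ∧ P b := by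
  simp only [Adj, induce]
  split_ifs with hP <;> simp [hP]

lemma isMatching_induce_iff :
    (G.induce P).IsMatching M ↔ G.IsMatching M ∧ ∀ v, Covers M v → P v := by
  constructor
  · rintro ⟨h1, h2⟩
    have hadj : ∀ p ∈ M, G.Adj p.1 p.2 ∧ P p.1 ∧ P p.2 :=
      fun p hp => adj_induce_iff.1 (h1 p hp)
    refine ⟨⟨fun p hp => (hadj p hp).1, h2⟩, ?_⟩
    rintro v ⟨p, hp, rfl | rfl⟩
    exacts [(hadj p hp).2.1, (hadj p hp).2.2]
  · rintro ⟨⟨h1, h2⟩, h3⟩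
    exact ⟨fun p hp => adj_induce_iff.2
      ⟨h1 p hp, h3 _ ⟨p, hp, .inl rfl⟩, h3 _ ⟨p, hp, .inr rfl⟩⟩, h2⟩

lemma degree_induce_le (v : V) : (G.induce P).degree v ≤ G.degree v :=
  calc ∑ u ∈ G.verts.filter P, (if P v ∧ P u then G.mult v u else 0)
      ≤ ∑ u ∈ G.verts.filter P, G.mult v u :=
        Finset.sum_le_sum fun u _ => by split_ifs <;> simp
    _ ≤ G.degree v := Finset.sum_le_sum_of_subset (Finset.filter_subset _ _)

lemma maxDegree_induce_le : (G.induce P).maxDegree ≤ G.maxDegree :=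
  Finset.sup_le fun v hv =>
    (degree_induce_le v).trans (Finset.le_sup (Finset.mem_of_mem_filter v hv))

lemma card_verts_induce_lt {v : V} (hv : v ∈ G.verts) (hPv : ¬P v) :
    (G.induce P).verts.card < G.verts.card :=
  Finset.card_lt_card (Finset.filter_ssubset.2 ⟨v, hv, hPv⟩)

end Induce

lemma sum_sum_mult_insert [DecidableEq V] {s : Finset V} {a : V} (ha : a ∉ s) :
    ∑ u ∈ insert a s, ∑ v ∈ insert a s, G.mult u v =
      ∑ u ∈ s, ∑ v ∈ s, G.mult u v + 2 * ∑ v ∈ s, G.mult a v := by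
  simp only [Finset.sum_insert ha, G.loopless, zero_add, Finset.sum_add_distrib,
    G.symm _ a]
  ring

lemma even_sum_sum_mult (s : Finset V) : Even (∑ u ∈ s, ∑ v ∈ s, G.mult u v) := by
  classical
  induction s using Finset.induction_on with
  | empty => simp
  | insert a s ha ih => rw [sum_sum_mult_insert ha]; exact ih.add (even_two_mul _)

lemma two_mul_edgeCount (G : Multigraph V) :
    2 * G.edgeCount = ∑ u ∈ G.verts, ∑ v ∈ G.verts, G.mult u v :=
  Nat.two_mul_div_two_of_even (G.even_sum_sum_mult G.verts)

lemma sum_degree_eq_two_mul_edgeCount (G : Multigraph V) :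
    ∑ v ∈ G.verts, G.degree v = 2 * G.edgeCount :=
  G.two_mul_edgeCount.symm

lemma two_mul_edgeCount_le {d : ℕ} (hΔ : G.maxDegree ≤ d) :
    2 * G.edgeCount ≤ d * G.verts.card := by
  rw [← sum_degree_eq_two_mul_edgeCount, mul_comm, ← smul_eq_mul, ← Finset.sum_const]
  exact Finset.sum_le_sum fun v hv => degree_le_of_maxDegree_le hΔ hv

lemma two_mul_edgeCount_induce (P : V → Prop) [DecidablePred P] :
    2 * (G.induce P).edgeCount =
      ∑ u ∈ G.verts with P u, ∑ v ∈ G.verts with P v, G.mult u v := by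
  rw [two_mul_edgeCount]
  refine Finset.sum_congr rfl fun u hu => Finset.sum_congr rfl fun v hv => ?_
  exact if_pos ⟨(Finset.mem_filter.1 hu).2, (Finset.mem_filter.1 hv).2⟩

lemma edgeCount_eq_add_induce_not (P : V → Prop) [DecidablePred P]
    (h : ∀ u v, P u → ¬P v → G.mult u v = 0) :
    G.edgeCount = (G.induce P).edgeCount + (G.induce (¬P ·)).edgeCount := by
  have hsplit : ∑ u ∈ G.verts, ∑ v ∈ G.verts, G.mult u v =
      ∑ u ∈ G.verts with P u, ∑ v ∈ G.verts with P v, G.mult u v +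
        ∑ u ∈ G.verts with ¬P u, ∑ v ∈ G.verts with ¬P v, G.mult u v := by
    rw [← Finset.sum_filter_add_sum_filter_not G.verts P]
    congr 1 <;> refine Finset.sum_congr rfl fun u hu => ?_ <;>
      rw [← Finset.sum_filter_add_sum_filter_not G.verts P]
    · rw [Finset.sum_eq_zero fun v hv =>
        h u v (Finset.mem_filter.1 hu).2 (Finset.mem_filter.1 hv).2, add_zero]
    · rw [Finset.sum_eq_zero fun v hv => (G.symm u v).trans
        (h v u (Finset.mem_filter.1 hv).2 (Finset.mem_filter.1 hu).2), zero_add]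
  have := G.two_mul_edgeCount
  have := G.two_mul_edgeCount_induce P
  have := G.two_mul_edgeCount_induce (¬P ·)
  omega

lemma edgeCount_eq_induce_ne_add_degree [DecidableEq V] {x : V} (hx : x ∈ G.verts) :
    G.edgeCount = (G.induce (· ≠ x)).edgeCount + G.degree x := by
  have h2m := G.two_mul_edgeCount
  have h2m' := G.two_mul_edgeCount_induce (· ≠ x)
  rw [← Finset.insert_erase hx, sum_sum_mult_insert (Finset.notMem_erase x _)] at h2m
  rw [Finset.filter_ne'] at h2m'
  have hdeg : G.degree x = ∑ v ∈ G.verts.erase x, G.mult x v :=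
    (Finset.sum_erase _ (G.loopless x)).symm
  omega

def IsEssential (G : Multigraph V) (x : V) : Prop := ∀ M, G.IsMaximumMatching M → Covers M x

section DecidableEq

variable [DecidableEq V]

lemma IsEssential.matchingNumber_induce_ne_lt {x : V} (hx : G.IsEssential x) :
    (G.induce (· ≠ x)).matchingNumber < G.matchingNumber := by
  obtain ⟨K, hK⟩ := (G.induce (· ≠ x)).exists_isMaximumMatching
  obtain ⟨hKG, hKx⟩ := isMatching_induce_iff.1 hK.1
  rw [← hK.card_eq]
  exact hKG.card_le_matchingNumber.lt_of_ne fun h =>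
    hKx x (hx K ⟨hKG, fun L hL => h ▸ hL.card_le_matchingNumber⟩) rfl

lemma IsEssential.edgeCount_add_le {d : ℕ} {x : V} (hΔ : G.maxDegree ≤ d) (hx : x ∈ G.verts)
    (hess : G.IsEssential x)
    (h : (G.induce (· ≠ x)).edgeCount ≤ (d + d / 2) * (G.induce (· ≠ x)).matchingNumber) :
    G.edgeCount + d / 2 ≤ (d + d / 2) * G.matchingNumber := by
  have hlt := Nat.mul_le_mul_left (d + d / 2) hess.matchingNumber_induce_ne_lt
  rw [Nat.mul_succ] at hlt
  have := edgeCount_eq_induce_ne_add_degree hx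
  have := degree_le_of_maxDegree_le hΔ hx
  omega

lemma IsMaximumMatching.erase (hM : G.IsMaximumMatching M) {p : V × V} (hp : p ∈ M) :
    (G.induce (¬Incident p ·)).IsMaximumMatching (M.erase p) := by
  refine ⟨isMatching_induce_iff.2 ⟨hM.1.mono (Finset.erase_subset _ _),
    fun v hv hpv => hM.1.not_covers_erase hp hpv hv⟩, fun K hK => ?_⟩
  obtain ⟨hKG, hKp⟩ := isMatching_induce_iff.1 hK
  have h1 : ¬Covers K p.1 := fun h => hKp _ h (.inl rfl)
  have := hM.2 _ (hKG.insert (hM.1.adj hp) h1 fun h => hKp _ h (.inr rfl))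
  rw [card_insert_of_not_covers h1] at this
  rw [Finset.card_erase_of_mem hp]
  omega

lemma IsMaximumMatching.erase_of_not_covers (hM : G.IsMaximumMatching M)
    (hN : G.IsMaximumMatching N) {p q : V × V} (hp : p ∈ M) (hq : q ∈ N)
    (h : ∀ v, Incident p v → ¬Covers (N.erase q) v) :
    (G.induce (¬Incident p ·)).IsMaximumMatching (N.erase q) := by
  refine (hM.erase hp).of_card_eq (isMatching_induce_iff.2 ⟨hN.1.mono (Finset.erase_subset _ _),
    fun v hv hpv => h v hpv hv⟩) ?_
  rw [Finset.card_erase_of_mem hp, Finset.card_erase_of_mem hq, hM.card_eq, hN.card_eq]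

/-- `M'` is `M` switched along the `M`/`N`-alternating path starting at `t`, and `z` is the other
end of that path. -/
theorem IsMaximumMatching.exists_swap (hM : G.IsMaximumMatching M) (hN : G.IsMaximumMatching N)
    {t : V} (htM : Covers M t) (htN : ¬Covers N t) :
    ∃ M' z, G.IsMaximumMatching M' ∧ ¬Covers M' t ∧
      ∀ w, ¬Covers M w → w ≠ z → ¬Covers M' w := by
  induction hn : M.card generalizing G M N t with
  | zero =>
    obtain ⟨p, hp, -⟩ := htM
    simp_all
  | succ n ih =>
  obtain ⟨p, hp, t₁, htt₁, hpe⟩ := hM.1.exists_adj_of_covers htM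
  have ht₁M : Covers M t₁ := ⟨p, hp, (hpe t₁).2 (.inr rfl)⟩
  obtain ⟨q, hq, t₂, ht₁t₂, hqe⟩ :=
    hN.1.exists_adj_of_covers (hN.covers_of_adj htt₁ htN)
  have ht₂N : Covers N t₂ := ⟨q, hq, (hqe t₂).2 (.inr rfl)⟩
  have ht₂t : t₂ ≠ t := fun h => htN (h ▸ ht₂N)
  suffices ∃ K z, G.IsMatching K ∧ K.card = n ∧
      ¬Covers K t ∧ ¬Covers K t₁ ∧ ¬Covers K t₂ ∧
      ∀ w, ¬Covers M w → w ≠ z → w ≠ t₂ ∧ ¬Covers K w by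
    obtain ⟨K, z, hK, hKn, hKt, hKt₁, hKt₂, hKw⟩ := this
    refine ⟨insert (t₁, t₂) K, z, hM.of_card_eq (hK.insert ht₁t₂ hKt₁ hKt₂)
      (by rw [card_insert_of_not_covers hKt₁, hKn, hn]), ?_, fun w hw hwz => ?_⟩
    · rw [covers_insert]
      rintro (h | h | h)
      exacts [htt₁.ne h, ht₂t h.symm, hKt h]
    · rw [covers_insert]
      rintro (rfl | rfl | h)
      exacts [hw ht₁M, (hKw _ hw hwz).1 rfl, (hKw w hw hwz).2 h]
  have hpt : Incident p t := (hpe t).2 (.inl rfl)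
  have hpt₁ : Incident p t₁ := (hpe t₁).2 (.inr rfl)
  have hMp : G.IsMatching (M.erase p) := hM.1.mono (Finset.erase_subset _ _)
  have hcard : (M.erase p).card = n := by rw [Finset.card_erase_of_mem hp, hn]; rfl
  by_cases ht₂M : Covers M t₂
  · -- recurse in `G - t - t₁`, where `M - tt₁` and `N - t₁t₂` are maximum matchings
    have hM' := hM.erase hp
    have hN' := hM.erase_of_not_covers hN hp hq (by
      rw [forall_congr' fun v => imp_congr_left (hpe v)]
      rintro v (rfl | rfl) hv
      exacts [htN (hv.mono (Finset.erase_subset _ _)),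
        hN.1.not_covers_erase hq ((hqe v).2 (.inl rfl)) hv])
    have ht₂p : ¬Incident p t₂ := by
      rw [hpe]
      rintro (h | h)
      exacts [ht₂t h, ht₁t₂.ne h.symm]
    obtain ⟨K, z, hK, hKt₂, hKw⟩ := ih hM' hN' (covers_erase ht₂M ht₂p)
      (hN.1.not_covers_erase hq ((hqe t₂).2 (.inr rfl))) hcard
    obtain ⟨hKG, hKp⟩ := isMatching_induce_iff.1 hK.1
    refine ⟨K, z, hKG, by rw [hK.card_eq, ← hM'.card_eq, hcard], fun h => hKp t h hpt,
      fun h => hKp t₁ h hpt₁, hKt₂, fun w hw hwz => ⟨?_, hKw w ?_ hwz⟩⟩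
    · rintro rfl
      exact hw ht₂M
    · exact fun h => hw (h.mono (Finset.erase_subset _ _))
  · exact ⟨M.erase p, t₂, hMp, hcard, hM.1.not_covers_erase hp hpt,
      hM.1.not_covers_erase hp hpt₁, fun h => ht₂M (h.mono (Finset.erase_subset _ _)),
      fun w hw hwt₂ => ⟨hwt₂, fun h => hw (h.mono (Finset.erase_subset _ _))⟩⟩

end DecidableEq

theorem eq_of_reflTransGen_of_not_covers (hD : ∀ v ∈ G.verts, ¬G.IsEssential v) {u v : V}
    (huv : Relation.ReflTransGen G.Adj u v) :
    ∀ M, G.IsMaximumMatching M → ¬Covers M u → ¬Covers M v → u = v := by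
  classical
  induction huv using Relation.ReflTransGen.head_induction_on with
  | refl => exact fun _ _ _ _ => rfl
  | @head u t hut _ ih =>
    intro M hM hu hv
    by_contra huv
    have htM := hM.covers_of_adj hut hu
    obtain ⟨N, hN, htN⟩ : ∃ N, G.IsMaximumMatching N ∧ ¬Covers N t := by
      simpa [IsEssential] using hD t hut.mem_right
    obtain ⟨M', z, hM', htM', hM'w⟩ := hM.exists_swap hN htM htN
    by_cases hzu : z = u
    · have htv := ih M' hM' htM' (hM'w v hv (hzu ▸ Ne.symm huv))
      exact hv (htv ▸ htM)
    · exact htM' (hM'.covers_of_adj hut (hM'w u hu (Ne.symm hzu)))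

theorem card_verts_le_of_forall_not_isEssential (hconn : G.Connected)
    (hD : ∀ v ∈ G.verts, ¬G.IsEssential v) : G.verts.card ≤ 2 * G.matchingNumber + 1 := by
  classical
  obtain ⟨M, hM⟩ := G.exists_isMaximumMatching
  have huncovered : (G.verts.filter (¬Covers M ·)).card ≤ 1 :=
    Finset.card_le_one.2 fun u hu v hv =>
      eq_of_reflTransGen_of_not_covers hD (hconn u (Finset.mem_filter.1 hu).1 v
        (Finset.mem_filter.1 hv).1) M hM (Finset.mem_filter.1 hu).2 (Finset.mem_filter.1 hv).2
  have := Finset.card_filter_add_card_filter_not (s := G.verts) (Covers M)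
  rw [hM.1.card_filter_covers, hM.card_eq] at this
  omega

lemma edgeCount_eq_zero_iff : G.edgeCount = 0 ↔ ∀ u v, ¬G.Adj u v := by
  have h2m := G.two_mul_edgeCount
  have hsum : ∑ u ∈ G.verts, ∑ v ∈ G.verts, G.mult u v = 0 ↔
      ∀ u ∈ G.verts, ∀ v ∈ G.verts, G.mult u v = 0 := by
    simp only [Finset.sum_eq_zero_iff]
  constructor
  · intro h u v huv
    exact huv.ne' (hsum.1 (by omega) u huv.mem_left v huv.mem_right)
  · intro h
    have := hsum.2 fun u _ v _ => Nat.eq_zero_of_not_pos (h u v)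
    omega

lemma matchingNumber_eq_zero_iff : G.matchingNumber = 0 ↔ ∀ u v, ¬G.Adj u v := by
  classical
  constructor
  · intro h u v huv
    have := (IsMatching.insert (G := G) (K := ∅) ⟨by simp, by simp⟩ huv (by simp [Covers])
      (by simp [Covers])).card_le_matchingNumber
    simp [h] at this
  · intro h
    obtain ⟨M, hM⟩ := G.exists_isMaximumMatching
    rw [← hM.card_eq, Finset.card_eq_zero, Finset.eq_empty_iff_forall_notMem]
    exact fun p hp => h _ _ (hM.1.adj hp)

lemma matchingNumber_eq_zero_iff_edgeCount : G.matchingNumber = 0 ↔ G.edgeCount = 0 :=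
  matchingNumber_eq_zero_iff.trans edgeCount_eq_zero_iff.symm

lemma matchingNumber_induce_add_le (P : V → Prop) [DecidablePred P] :
    (G.induce P).matchingNumber + (G.induce (¬P ·)).matchingNumber ≤ G.matchingNumber := by
  classical
  obtain ⟨M₁, hM₁⟩ := (G.induce P).exists_isMaximumMatching
  obtain ⟨M₂, hM₂⟩ := (G.induce (¬P ·)).exists_isMaximumMatching
  obtain ⟨h₁, hP₁⟩ := isMatching_induce_iff.1 hM₁.1
  obtain ⟨h₂, hP₂⟩ := isMatching_induce_iff.1 hM₂.1
  have hsep : ∀ p ∈ M₁, ∀ q ∈ M₂, ∀ v, Incident p v → ¬Incident q v :=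
    fun p hp q hq v hpv hqv => hP₂ v ⟨q, hq, hqv⟩ (hP₁ v ⟨p, hp, hpv⟩)
  have hM : G.IsMatching (M₁ ∪ M₂) := by
    refine isMatching_iff_incident.2 ⟨fun p hp => ?_, fun p hp q hq v hpv hqv => ?_⟩
    · rcases Finset.mem_union.1 hp with hp | hp
      exacts [h₁.adj hp, h₂.adj hp]
    rcases Finset.mem_union.1 hp with hp | hp <;> rcases Finset.mem_union.1 hq with hq | hq
    · exact h₁.eq_of_incident hp hq hpv hqv
    · exact (hsep p hp q hq v hpv hqv).elim
    · exact (hsep q hq p hp v hqv hpv).elim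
    · exact h₂.eq_of_incident hp hq hpv hqv
  rw [← hM₁.card_eq, ← hM₂.card_eq, ← Finset.card_union_of_disjoint
    (Finset.disjoint_left.2 fun p hp₁ hp₂ => hsep p hp₁ p hp₂ p.1 (.inl rfl) (.inl rfl))]
  exact hM.card_le_matchingNumber

lemma edgeCount_le_of_card_verts_le {d : ℕ} (hΔ : G.maxDegree ≤ d)
    (h : G.verts.card ≤ 2 * G.matchingNumber + 1) :
    G.edgeCount ≤ d * G.matchingNumber + d / 2 := by
  have := (two_mul_edgeCount_le hΔ).trans (Nat.mul_le_mul_left d h)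
  rw [mul_add, mul_one, mul_left_comm] at this
  omega

theorem edgeCount_le_mul_matchingNumber {d : ℕ} (hΔ : G.maxDegree ≤ d) :
    G.edgeCount ≤ (d + d / 2) * G.matchingNumber := by
  classical
  induction hn : G.verts.card using Nat.strong_induction_on generalizing G with
  | _ n ih =>
  subst hn
  have ih' : ∀ (P : V → Prop) [DecidablePred P], (∃ v ∈ G.verts, ¬P v) →
      (G.induce P).edgeCount ≤ (d + d / 2) * (G.induce P).matchingNumber :=
    fun P _ ⟨v, hv, hPv⟩ =>
      ih _ (card_verts_induce_lt hv hPv) (maxDegree_induce_le.trans hΔ) rfl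
  by_cases hconn : G.Connected
  · by_cases hess : ∃ x ∈ G.verts, G.IsEssential x
    · obtain ⟨x, hx, hess⟩ := hess
      have := hess.edgeCount_add_le hΔ hx (ih' _ ⟨x, hx, not_not.2 rfl⟩)
      omega
    push Not at hess
    have hm := edgeCount_le_of_card_verts_le hΔ
      (card_verts_le_of_forall_not_isEssential hconn hess)
    rcases Nat.eq_zero_or_pos G.matchingNumber with hν | hν
    · simp [matchingNumber_eq_zero_iff_edgeCount.1 hν]
    · have := Nat.mul_le_mul_left (d / 2) hν
      rw [add_mul]
      omega
  · obtain ⟨a, ha, b, hb, hab⟩ :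
        ∃ a ∈ G.verts, ∃ b ∈ G.verts, ¬Relation.ReflTransGen G.Adj a b := by
      simp only [Connected, not_forall, exists_prop] at hconn
      exact hconn
    let P := Relation.ReflTransGen G.Adj a
    have hcross : ∀ u v, P u → ¬P v → G.mult u v = 0 := fun u v hu hv =>
      Nat.eq_zero_of_not_pos fun huv => hv (hu.tail huv)
    calc G.edgeCount = (G.induce P).edgeCount + (G.induce (¬P ·)).edgeCount :=
          edgeCount_eq_add_induce_not P hcross
      _ ≤ (d + d / 2) * (G.induce P).matchingNumber +
          (d + d / 2) * (G.induce (¬P ·)).matchingNumber :=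
          add_le_add (ih' P ⟨b, hb, hab⟩) (ih' _ ⟨a, ha, not_not.2 .refl⟩)
      _ ≤ (d + d / 2) * G.matchingNumber := by
          rw [← mul_add]
          exact Nat.mul_le_mul_left _ (matchingNumber_induce_add_le P)

section DecidableEq

variable [DecidableEq V]

lemma degree_of_verts_eq_triple {x y z : V} (hv : G.verts = {x, y, z}) (hxy : x ≠ y)
    (hxz : x ≠ z) (hyz : y ≠ z) :
    G.degree x = G.mult x y + G.mult x z ∧ G.degree y = G.mult x y + G.mult y z ∧
      G.degree z = G.mult x z + G.mult y z := by
  have hdeg : ∀ {a b c : V}, G.verts = {a, b, c} → a ≠ b → a ≠ c → b ≠ c →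
      G.degree a = G.mult a b + G.mult a c := fun hv hab hac hbc => by
    rw [degree, hv, Finset.sum_insert (by simp [hab, hac]), Finset.sum_pair hbc, G.loopless,
      zero_add]
  refine ⟨hdeg hv hxy hxz hyz, ?_, ?_⟩
  · rw [hdeg (hv.trans (Finset.insert_comm x y {z})) hxy.symm hyz hxz, G.symm y x]
  · rw [hdeg (by rw [hv, Finset.pair_comm, Finset.insert_comm]) hxz.symm hyz.symm hxy,
      G.symm z x, G.symm z y]

lemma edgeCount_of_verts_eq_triple {x y z : V} (hv : G.verts = {x, y, z}) (hxy : x ≠ y)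
    (hxz : x ≠ z) (hyz : y ≠ z) : G.edgeCount = G.mult x y + G.mult x z + G.mult y z := by
  have h := G.sum_degree_eq_two_mul_edgeCount
  obtain ⟨hx, hy, hz⟩ := degree_of_verts_eq_triple hv hxy hxz hyz
  rw [hv, Finset.sum_insert (by simp [hxy, hxz]), Finset.sum_pair hyz, hx, hy, hz] at h
  omega

lemma IsShannon.edgeCount_eq {d : ℕ} (h : G.IsShannon d) : G.edgeCount = d + d / 2 := by
  obtain ⟨x, y, z, hxy, hxz, hyz, hv, h₁, h₂, h₃⟩ := h
  rw [edgeCount_of_verts_eq_triple hv hxy hxz hyz, h₁, h₂, h₃]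
  omega

lemma IsShannon.matchingNumber_eq {d : ℕ} (hd : 2 ≤ d) (h : G.IsShannon d) :
    G.matchingNumber = 1 := by
  obtain ⟨x, y, z, hxy, hxz, hyz, hv, h₁, -, -⟩ := h
  have hpos : G.matchingNumber ≠ 0 := fun h0 =>
    matchingNumber_eq_zero_iff.1 h0 x y (by rw [Adj, h₁]; omega)
  obtain ⟨M, hM⟩ := G.exists_isMaximumMatching
  have h3 : G.verts.card = 3 := Finset.card_eq_three.2 ⟨x, y, z, hxy, hxz, hyz, hv⟩
  have := hM.1.two_mul_card_le
  rw [hM.card_eq, h3] at this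
  omega

lemma isShannon_of_card_verts_eq_three {d : ℕ} (hΔ : G.maxDegree ≤ d) (h3 : G.verts.card = 3)
    (hm : G.edgeCount = d + d / 2) : G.IsShannon d := by
  obtain ⟨x, y, z, hxy, hxz, hyz, hv⟩ := Finset.card_eq_three.1 h3
  rw [edgeCount_of_verts_eq_triple hv hxy hxz hyz] at hm
  obtain ⟨hx, hy, hz⟩ := degree_of_verts_eq_triple hv hxy hxz hyz
  have hΔx := degree_le_of_maxDegree_le hΔ (v := x) (by simp [hv])
  have hΔy := degree_le_of_maxDegree_le hΔ (v := y) (by simp [hv])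
  have hΔz := degree_le_of_maxDegree_le hΔ (v := z) (by simp [hv])
  -- each multiplicity is at least `⌊d/2⌋`, and the one opposite the apex is `⌈d/2⌉`
  by_cases hxy' : (d + 1) / 2 ≤ G.mult x y
  · refine ⟨z, x, y, hxz.symm, hyz.symm, hxy, by rw [hv]; grind, ?_, ?_, by omega⟩ <;>
      rw [G.symm] <;> omega
  by_cases hxz' : (d + 1) / 2 ≤ G.mult x z
  · refine ⟨y, x, z, hxy.symm, hyz, hxz, by rw [hv, Finset.insert_comm], ?_, by omega,
      by omega⟩
    rw [G.symm]
    omega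
  exact ⟨x, y, z, hxy, hxz, hyz, hv, by omega, by omega, by omega⟩

theorem isShannon_of_edgeCount_eq {d : ℕ} (hd : 2 ≤ d) (hconn : G.Connected)
    (hΔ : G.maxDegree ≤ d) (hm : G.edgeCount ≠ 0)
    (heq : G.edgeCount = (d + d / 2) * G.matchingNumber) : G.IsShannon d := by
  by_cases hess : ∃ x ∈ G.verts, G.IsEssential x
  · obtain ⟨x, hx, hess⟩ := hess
    have := hess.edgeCount_add_le hΔ hx (edgeCount_le_mul_matchingNumber
      (maxDegree_induce_le.trans hΔ))
    omega
  push Not at hess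
  have hcard := card_verts_le_of_forall_not_isEssential hconn hess
  have hm' := edgeCount_le_of_card_verts_le hΔ hcard
  have hν : G.matchingNumber = 1 := by
    have hν0 : G.matchingNumber ≠ 0 := mt matchingNumber_eq_zero_iff_edgeCount.1 hm
    by_contra hν1
    have := Nat.mul_le_mul_left (d / 2) (show 2 ≤ G.matchingNumber by omega)
    rw [heq, add_mul] at hm'
    omega
  rw [hν] at heq hcard
  have h2m := two_mul_edgeCount_le hΔ
  have h3 : G.verts.card = 3 := by
    by_contra h3
    have := Nat.mul_le_mul_left d (show G.verts.card ≤ 2 by omega)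
    omega
  exact isShannon_of_card_verts_eq_three hΔ h3 (by omega)

theorem mul_matchingNumber_eq_edgeCount_iff {d : ℕ} (hd : 2 ≤ d) (hconn : G.Connected)
    (hΔ : G.maxDegree ≤ d) :
    (d + d / 2) * G.matchingNumber = G.edgeCount ↔ G.edgeCount = 0 ∨ G.IsShannon d := by
  refine ⟨fun heq => ?_, ?_⟩
  · by_cases hm : G.edgeCount = 0
    · exact .inl hm
    · exact .inr (isShannon_of_edgeCount_eq hd hconn hΔ hm heq.symm)
  · rintro (hm | hS)
    · rw [matchingNumber_eq_zero_iff_edgeCount.2 hm, hm, mul_zero]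
    · rw [hS.matchingNumber_eq hd, hS.edgeCount_eq, mul_one]

end DecidableEq

end Multigraph

/-- **Key matching theorem.** For `d ≥ 4`, a connected multigraph `G` with
`m` edges and `Δ(G) ≤ d` has `α'(G) ≥ m/⌊3d/2⌋`, with equality iff `m = 0`
or `G` is a Shannon multigraph of degree `d`. -/
theorem stmt2 {V : Type*} [DecidableEq V] (d m : ℕ) (hd : 4 ≤ d)
    (G : Multigraph V) (hconn : G.Connected) (hΔ : G.maxDegree ≤ d)
    (hm : G.edgeCount = m) :
    (m : ℚ) / ((3 * d / 2 : ℕ) : ℚ) ≤ (G.matchingNumber : ℚ) ∧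
      ((G.matchingNumber : ℚ) = (m : ℚ) / ((3 * d / 2 : ℕ) : ℚ) ↔
        m = 0 ∨ G.IsShannon d) := by
  subst hm
  have hL : 3 * d / 2 = d + d / 2 := by omega
  have hLpos : (0 : ℚ) < ((3 * d / 2 : ℕ) : ℚ) := by exact_mod_cast (by omega : 0 < 3 * d / 2)
  rw [div_le_iff₀ hLpos, eq_div_iff hLpos.ne', hL]
  norm_cast
  rw [mul_comm]
  exact ⟨G.edgeCount_le_mul_matchingNumber hΔ,
    G.mul_matchingNumber_eq_edgeCount_iff (by omega) hconn hΔ⟩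
end

section
/- Let G be a multigraph with m edges. Then α'(G) ≥ m/⌊3Δ(G)/2⌋ whenever Δ(G) ≥ 1, i.e., ⌊3Δ(G)/2⌋ · α'(G) ≥ m. -/
set_option linter.unusedSectionVars false

namespace Aux3
open Multigraph Finset

variable {V : Type*} [DecidableEq V] (G : Multigraph V) (M : Finset (V × V))

/-- The matched vertices. -/
def Uset : Finset V := M.biUnion fun p => {p.1, p.2}

variable {G M}

lemma mem_Uset {a : V} : a ∈ Uset M ↔ ∃ p ∈ M, a = p.1 ∨ a = p.2 := by
  simp [Uset, Finset.mem_biUnion, Finset.mem_insert, Finset.mem_singleton]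

section basic
variable (hM : G.IsMatching M)
include hM

lemma pair_ne {p : V × V} (hp : p ∈ M) : p.1 ≠ p.2 := by
  intro h
  have := hM.1 p hp
  rw [h, G.loopless] at this
  exact Nat.lt_irrefl 0 this

lemma pair_mem_verts {p : V × V} (hp : p ∈ M) : p.1 ∈ G.verts ∧ p.2 ∈ G.verts :=
  G.supp _ _ (hM.1 p hp).ne'

lemma Uset_subset : Uset M ⊆ G.verts := by
  intro a ha
  rcases mem_Uset.mp ha with ⟨p, hp, h | h⟩ <;> subst h
  · exact (pair_mem_verts hM hp).1
  · exact (pair_mem_verts hM hp).2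

lemma unmatched_ne {x : V} (hx : x ∉ Uset M) {p : V × V} (hp : p ∈ M) :
    x ≠ p.1 ∧ x ≠ p.2 := by
  constructor <;> rintro rfl <;> exact hx (mem_Uset.mpr ⟨p, hp, by simp⟩)

lemma pair_facts {e : V × V} (he : e ∈ M) {u v : V} (h : (u, v) = e ∨ (v, u) = e) :
    u ≠ v ∧ u ∈ Uset M ∧ v ∈ Uset M ∧ 0 < G.mult u v := by
  rcases h with h | h <;> subst h
  · exact ⟨pair_ne hM he, mem_Uset.mpr ⟨_, he, by simp⟩, mem_Uset.mpr ⟨_, he, by simp⟩,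
      hM.1 _ he⟩
  · refine ⟨(pair_ne hM he).symm, mem_Uset.mpr ⟨_, he, by simp⟩, mem_Uset.mpr ⟨_, he, by simp⟩, ?_⟩
    rw [G.symm]; exact hM.1 _ he

lemma pairs_ne {e f : V × V} (he : e ∈ M) (hf : f ∈ M) (hef : e ≠ f) {u v p q : V}
    (h1 : (u, v) = e ∨ (v, u) = e) (h2 : (p, q) = f ∨ (q, p) = f) :
    u ≠ p ∧ u ≠ q ∧ v ≠ p ∧ v ≠ q := by
  have h := hM.2 e he f hf hef
  rcases h1 with h1 | h1 <;> rcases h2 with h2 | h2 <;> subst h1 <;> subst h2 <;>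
    simp only [] at h <;> tauto

end basic

lemma even_mult_sum {V : Type*} (G : Multigraph V) (s : Finset V) :
    Even (∑ a ∈ s, ∑ b ∈ s, G.mult a b) := by
  classical
  induction s using Finset.induction_on with
  | empty => simp
  | @insert a s ha ih =>
    rw [Finset.sum_insert ha, Finset.sum_insert ha]
    have hrow : ∀ x ∈ s, ∑ b ∈ insert a s, G.mult x b
        = G.mult x a + ∑ b ∈ s, G.mult x b := fun x _ => Finset.sum_insert ha
    rw [Finset.sum_congr rfl hrow, Finset.sum_add_distrib]
    have hsym : ∑ x ∈ s, G.mult x a = ∑ b ∈ s, G.mult a b :=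
      Finset.sum_congr rfl fun x _ => G.symm x a
    rw [G.loopless, hsym]
    obtain ⟨t, ht⟩ := ih
    exact ⟨(∑ b ∈ s, G.mult a b) + t, by omega⟩

variable (G M) in
/-- Sum of multiplicities from `u` into the unmatched vertices. -/
def aW (u : V) : ℕ := ∑ x ∈ G.verts \ Uset M, G.mult u x

variable (G M) in
def w2 (u v : V) : ℕ := aW G M u + aW G M v + G.degree u + G.degree v

lemma degree_le {v : V} (hv : v ∈ G.verts) : G.degree v ≤ G.maxDegree :=
  Finset.le_sup hv

lemma aW_le_degree {u : V} : aW G M u ≤ G.degree u :=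
  Finset.sum_le_sum_of_subset (Finset.sdiff_subset)

lemma aW_add_mult_le {u v : V} (hv : v ∈ G.verts) (hvU : v ∈ Uset M) :
    aW G M u + G.mult u v ≤ G.degree u := by
  have hnm : v ∉ G.verts \ Uset M := fun h => (Finset.mem_sdiff.mp h).2 hvU
  have hsub : insert v (G.verts \ Uset M) ⊆ G.verts := by
    intro t ht
    rcases Finset.mem_insert.mp ht with rfl | ht
    · exact hv
    · exact (Finset.mem_sdiff.mp ht).1
  calc aW G M u + G.mult u v = ∑ x ∈ insert v (G.verts \ Uset M), G.mult u x := by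
        unfold aW; rw [Finset.sum_insert hnm]; omega
    _ ≤ G.degree u := Finset.sum_le_sum_of_subset hsub
section aug
variable (hM : G.IsMatching M) (hmax : ∀ N, G.IsMatching N → N.card ≤ M.card)
include hM hmax

lemma no_aug (S N : Finset (V × V)) (hS : S ⊆ M)
    (hN1 : ∀ r ∈ N, 0 < G.mult r.1 r.2)
    (hN2 : ∀ r ∈ N, ∀ r' ∈ N, r ≠ r' → r.1 ≠ r'.1 ∧ r.1 ≠ r'.2 ∧ r.2 ≠ r'.1 ∧ r.2 ≠ r'.2)
    (hNM : ∀ r ∈ N, ∀ p ∈ M, p ∉ S → r.1 ≠ p.1 ∧ r.1 ≠ p.2 ∧ r.2 ≠ p.1 ∧ r.2 ≠ p.2)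
    (hcard : S.card < N.card) : False := by
  have hdisj : Disjoint (M \ S) N := by
    rw [Finset.disjoint_right]
    intro r hrN hrMS
    rw [Finset.mem_sdiff] at hrMS
    exact (hNM r hrN r hrMS.1 hrMS.2).1 rfl
  have hmatch : G.IsMatching ((M \ S) ∪ N) := by
    constructor
    · intro p hp
      rcases Finset.mem_union.mp hp with h | h
      · exact hM.1 p (Finset.mem_sdiff.mp h).1
      · exact hN1 p h
    · intro p hp q hq hpq
      rcases Finset.mem_union.mp hp with h | h <;> rcases Finset.mem_union.mp hq with h' | h'
      · exact hM.2 p (Finset.mem_sdiff.mp h).1 q (Finset.mem_sdiff.mp h').1 hpq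
      · obtain ⟨a, b, c, d⟩ := hNM q h' p (Finset.mem_sdiff.mp h).1 (Finset.mem_sdiff.mp h).2
        exact ⟨a.symm, c.symm, b.symm, d.symm⟩
      · exact hNM p h q (Finset.mem_sdiff.mp h').1 (Finset.mem_sdiff.mp h').2
      · exact hN2 p h q h' hpq
  have hc := hmax _ hmatch
  rw [Finset.card_union_of_disjoint hdisj, Finset.card_sdiff_of_subset hS] at hc
  have := Finset.card_le_card hS
  omega

lemma noedge_unmatched {x y : V} (hx : x ∉ Uset M) (hy : y ∉ Uset M) (hxy : x ≠ y) :
    G.mult x y = 0 := by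
  by_contra h
  refine no_aug hM hmax ∅ {(x, y)} (Finset.empty_subset _) ?_ ?_ ?_ (by simp)
  · intro r hr
    rw [Finset.mem_singleton] at hr; subst hr
    exact Nat.pos_of_ne_zero h
  · intro r hr r' hr' hne
    rw [Finset.mem_singleton] at hr hr'; subst hr; subst hr'; exact absurd rfl hne
  · intro r hr p hp _
    rw [Finset.mem_singleton] at hr; subst hr
    obtain ⟨a1, a2⟩ := unmatched_ne hM hx hp
    obtain ⟨b1, b2⟩ := unmatched_ne hM hy hp
    exact ⟨a1, a2, b1, b2⟩

lemma aug1 {e : V × V} (he : e ∈ M) {u v x y : V} (hor : (u, v) = e ∨ (v, u) = e)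
    (hx : x ∉ Uset M) (hy : y ∉ Uset M) (hxy : x ≠ y)
    (h1 : 0 < G.mult x u) (h2 : 0 < G.mult v y) : False := by
  obtain ⟨huv, hu, hv, hmuv⟩ := pair_facts hM he hor
  have hxu : x ≠ u := fun h => hx (h ▸ hu)
  have hxv : x ≠ v := fun h => hx (h ▸ hv)
  have hyu : y ≠ u := fun h => hy (h ▸ hu)
  have hyv : y ≠ v := fun h => hy (h ▸ hv)
  refine no_aug hM hmax {e} {(x, u), (v, y)} (by simpa using he) ?_ ?_ ?_ ?_
  · intro r hr
    simp only [Finset.mem_insert, Finset.mem_singleton] at hr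
    rcases hr with rfl | rfl
    · exact h1
    · exact h2
  · intro r hr r' hr' hne
    simp only [Finset.mem_insert, Finset.mem_singleton] at hr hr'
    rcases hr with rfl | rfl <;> rcases hr' with rfl | rfl <;>
      first
        | exact absurd rfl hne
        | exact ⟨by tauto, by tauto, by tauto, by tauto⟩
  · intro r hr p hp hpS
    have hpe : p ≠ e := by simpa using hpS
    obtain ⟨c1, c2, c3, c4⟩ := pairs_ne hM he hp (Ne.symm hpe) hor (Or.inl rfl)
    obtain ⟨a1, a2⟩ := unmatched_ne hM hx hp
    obtain ⟨b1, b2⟩ := unmatched_ne hM hy hp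
    simp only [Finset.mem_insert, Finset.mem_singleton] at hr
    rcases hr with rfl | rfl
    · exact ⟨a1, a2, c1, c2⟩
    · exact ⟨c3, c4, b1, b2⟩
  · rw [Finset.card_singleton]
    rw [Finset.card_insert_of_notMem (by simp [Prod.ext_iff]; intro h; exact absurd h hxv),
      Finset.card_singleton]
    omega
lemma aug2 {e f : V × V} (he : e ∈ M) (hf : f ∈ M) (hef : e ≠ f) {u v p q x y : V}
    (hore : (u, v) = e ∨ (v, u) = e) (horf : (p, q) = f ∨ (q, p) = f)
    (hx : x ∉ Uset M) (hy : y ∉ Uset M) (hxy : x ≠ y)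
    (h1 : 0 < G.mult x u) (h2 : 0 < G.mult v p) (h3 : 0 < G.mult q y) : False := by
  obtain ⟨huv, hu, hv, hmuv⟩ := pair_facts hM he hore
  obtain ⟨hpq, hp, hq, hmpq⟩ := pair_facts hM hf horf
  obtain ⟨c1, c2, c3, c4⟩ := pairs_ne hM he hf hef hore horf
  have hxu : x ≠ u := fun h => hx (h ▸ hu)
  have hxv : x ≠ v := fun h => hx (h ▸ hv)
  have hxp : x ≠ p := fun h => hx (h ▸ hp)
  have hxq : x ≠ q := fun h => hx (h ▸ hq)
  have hyu : y ≠ u := fun h => hy (h ▸ hu)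
  have hyv : y ≠ v := fun h => hy (h ▸ hv)
  have hyp : y ≠ p := fun h => hy (h ▸ hp)
  have hyq : y ≠ q := fun h => hy (h ▸ hq)
  refine no_aug hM hmax {e, f} {(x, u), (v, p), (q, y)} ?_ ?_ ?_ ?_ ?_
  · intro r hr
    simp only [Finset.mem_insert, Finset.mem_singleton] at hr
    rcases hr with rfl | rfl <;> assumption
  · intro r hr
    simp only [Finset.mem_insert, Finset.mem_singleton] at hr
    rcases hr with rfl | rfl | rfl <;> assumption
  · have A12 : x ≠ v ∧ x ≠ p ∧ u ≠ v ∧ u ≠ p := ⟨hxv, hxp, huv, c1⟩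
    have A13 : x ≠ q ∧ x ≠ y ∧ u ≠ q ∧ u ≠ y := ⟨hxq, hxy, c2, hyu.symm⟩
    have A23 : v ≠ q ∧ v ≠ y ∧ p ≠ q ∧ p ≠ y := ⟨c4, hyv.symm, hpq, hyp.symm⟩
    intro r hr r' hr' hne
    simp only [Finset.mem_insert, Finset.mem_singleton] at hr hr'
    rcases hr with rfl | rfl | rfl <;> rcases hr' with rfl | rfl | rfl
    · exact absurd rfl hne
    · exact A12
    · exact A13
    · exact ⟨A12.1.symm, A12.2.2.1.symm, A12.2.1.symm, A12.2.2.2.symm⟩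
    · exact absurd rfl hne
    · exact A23
    · exact ⟨A13.1.symm, A13.2.2.1.symm, A13.2.1.symm, A13.2.2.2.symm⟩
    · exact ⟨A23.1.symm, A23.2.2.1.symm, A23.2.1.symm, A23.2.2.2.symm⟩
    · exact absurd rfl hne
  · intro r hr p' hp' hpS
    simp only [Finset.mem_insert, Finset.mem_singleton, not_or] at hpS
    obtain ⟨hpe, hpf⟩ := hpS
    obtain ⟨d1, d2, d3, d4⟩ := pairs_ne hM he hp' (Ne.symm hpe) hore (Or.inl rfl)
    obtain ⟨e1, e2, e3, e4⟩ := pairs_ne hM hf hp' (Ne.symm hpf) horf (Or.inl rfl)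
    obtain ⟨a1, a2⟩ := unmatched_ne hM hx hp'
    obtain ⟨b1, b2⟩ := unmatched_ne hM hy hp'
    simp only [Finset.mem_insert, Finset.mem_singleton] at hr
    rcases hr with rfl | rfl | rfl
    · exact ⟨a1, a2, d1, d2⟩
    · exact ⟨d3, d4, e1, e2⟩
    · exact ⟨e3, e4, b1, b2⟩
  · have hxu' : (x, u) ≠ (v, p) := fun h => hxv (congrArg Prod.fst h)
    have hxu'' : (x, u) ≠ (q, y) := fun h => hxq (congrArg Prod.fst h)
    have hvp : (v, p) ≠ (q, y) := fun h => c4 (congrArg Prod.fst h)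
    rw [Finset.card_insert_of_notMem (by simpa using hef),
      Finset.card_insert_of_notMem (by simp [hxu', hxu'']),
      Finset.card_insert_of_notMem (by simpa using hvp),
      Finset.card_singleton, Finset.card_singleton]
    omega

lemma aug3 {e f g : V × V} (he : e ∈ M) (hf : f ∈ M) (hg : g ∈ M)
    (hef : e ≠ f) (heg : e ≠ g) (hfg : f ≠ g) {u v p q u' v' x y : V}
    (hore : (u, v) = e ∨ (v, u) = e) (horf : (p, q) = f ∨ (q, p) = f)
    (horg : (u', v') = g ∨ (v', u') = g)
    (hx : x ∉ Uset M) (hy : y ∉ Uset M) (hxy : x ≠ y)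
    (h1 : 0 < G.mult x u) (h2 : 0 < G.mult v p) (h3 : 0 < G.mult q v')
    (h4 : 0 < G.mult u' y) : False := by
  obtain ⟨huv, hu, hv, hmuv⟩ := pair_facts hM he hore
  obtain ⟨hpq, hp, hq, hmpq⟩ := pair_facts hM hf horf
  obtain ⟨huv', hu', hv', hmuv'⟩ := pair_facts hM hg horg
  obtain ⟨c1, c2, c3, c4⟩ := pairs_ne hM he hf hef hore horf
  obtain ⟨d1, d2, d3, d4⟩ := pairs_ne hM he hg heg hore horg
  obtain ⟨f1, f2, f3, f4⟩ := pairs_ne hM hf hg hfg horf horg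
  have hxu : x ≠ u := fun h => hx (h ▸ hu)
  have hxv : x ≠ v := fun h => hx (h ▸ hv)
  have hxp : x ≠ p := fun h => hx (h ▸ hp)
  have hxq : x ≠ q := fun h => hx (h ▸ hq)
  have hxu' : x ≠ u' := fun h => hx (h ▸ hu')
  have hxv' : x ≠ v' := fun h => hx (h ▸ hv')
  have hyu : y ≠ u := fun h => hy (h ▸ hu)
  have hyv : y ≠ v := fun h => hy (h ▸ hv)
  have hyp : y ≠ p := fun h => hy (h ▸ hp)
  have hyq : y ≠ q := fun h => hy (h ▸ hq)
  have hyu' : y ≠ u' := fun h => hy (h ▸ hu')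
  have hyv' : y ≠ v' := fun h => hy (h ▸ hv')
  refine no_aug hM hmax {e, f, g} {(x, u), (v, p), (q, v'), (u', y)} ?_ ?_ ?_ ?_ ?_
  · intro r hr
    simp only [Finset.mem_insert, Finset.mem_singleton] at hr
    rcases hr with rfl | rfl | rfl <;> assumption
  · intro r hr
    simp only [Finset.mem_insert, Finset.mem_singleton] at hr
    rcases hr with rfl | rfl | rfl | rfl <;> assumption
  · have A12 : x ≠ v ∧ x ≠ p ∧ u ≠ v ∧ u ≠ p := ⟨hxv, hxp, huv, c1⟩
    have A13 : x ≠ q ∧ x ≠ v' ∧ u ≠ q ∧ u ≠ v' := ⟨hxq, hxv', c2, d2⟩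
    have A14 : x ≠ u' ∧ x ≠ y ∧ u ≠ u' ∧ u ≠ y := ⟨hxu', hxy, d1, hyu.symm⟩
    have A23 : v ≠ q ∧ v ≠ v' ∧ p ≠ q ∧ p ≠ v' := ⟨c4, d4, hpq, f2⟩
    have A24 : v ≠ u' ∧ v ≠ y ∧ p ≠ u' ∧ p ≠ y := ⟨d3, hyv.symm, f1, hyp.symm⟩
    have A34 : q ≠ u' ∧ q ≠ y ∧ v' ≠ u' ∧ v' ≠ y := ⟨f3, hyq.symm, huv'.symm, hyv'.symm⟩
    intro r hr r' hr' hne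
    simp only [Finset.mem_insert, Finset.mem_singleton] at hr hr'
    rcases hr with rfl | rfl | rfl | rfl <;> rcases hr' with rfl | rfl | rfl | rfl
    · exact absurd rfl hne
    · exact A12
    · exact A13
    · exact A14
    · exact ⟨A12.1.symm, A12.2.2.1.symm, A12.2.1.symm, A12.2.2.2.symm⟩
    · exact absurd rfl hne
    · exact A23
    · exact A24
    · exact ⟨A13.1.symm, A13.2.2.1.symm, A13.2.1.symm, A13.2.2.2.symm⟩
    · exact ⟨A23.1.symm, A23.2.2.1.symm, A23.2.1.symm, A23.2.2.2.symm⟩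
    · exact absurd rfl hne
    · exact A34
    · exact ⟨A14.1.symm, A14.2.2.1.symm, A14.2.1.symm, A14.2.2.2.symm⟩
    · exact ⟨A24.1.symm, A24.2.2.1.symm, A24.2.1.symm, A24.2.2.2.symm⟩
    · exact ⟨A34.1.symm, A34.2.2.1.symm, A34.2.1.symm, A34.2.2.2.symm⟩
    · exact absurd rfl hne
  · intro r hr p' hp' hpS
    simp only [Finset.mem_insert, Finset.mem_singleton, not_or] at hpS
    obtain ⟨hpe, hpf, hpg⟩ := hpS
    obtain ⟨k1, k2, k3, k4⟩ := pairs_ne hM he hp' (Ne.symm hpe) hore (Or.inl rfl)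
    obtain ⟨l1, l2, l3, l4⟩ := pairs_ne hM hf hp' (Ne.symm hpf) horf (Or.inl rfl)
    obtain ⟨n1, n2, n3, n4⟩ := pairs_ne hM hg hp' (Ne.symm hpg) horg (Or.inl rfl)
    obtain ⟨a1, a2⟩ := unmatched_ne hM hx hp'
    obtain ⟨b1, b2⟩ := unmatched_ne hM hy hp'
    simp only [Finset.mem_insert, Finset.mem_singleton] at hr
    rcases hr with rfl | rfl | rfl | rfl
    · exact ⟨a1, a2, k1, k2⟩
    · exact ⟨k3, k4, l1, l2⟩
    · exact ⟨l3, l4, n3, n4⟩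
    · exact ⟨n1, n2, b1, b2⟩
  · have m1 : (x, u) ≠ (v, p) := fun h => hxv (congrArg Prod.fst h)
    have m2 : (x, u) ≠ (q, v') := fun h => hxq (congrArg Prod.fst h)
    have m3 : (x, u) ≠ (u', y) := fun h => hxu' (congrArg Prod.fst h)
    have m4 : (v, p) ≠ (q, v') := fun h => c4 (congrArg Prod.fst h)
    have m5 : (v, p) ≠ (u', y) := fun h => d3 (congrArg Prod.fst h)
    have m6 : (q, v') ≠ (u', y) := fun h => f3 (congrArg Prod.fst h)
    rw [Finset.card_insert_of_notMem (by simp [hef, heg]),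
      Finset.card_insert_of_notMem (by simpa using hfg),
      Finset.card_insert_of_notMem (by simp [m1, m2, m3]),
      Finset.card_insert_of_notMem (by simp [m4, m5]),
      Finset.card_insert_of_notMem (by simpa using m6),
      Finset.card_singleton, Finset.card_singleton]
    omega

lemma common_nbr {p : V × V} (hp : p ∈ M) (h1 : aW G M p.1 ≠ 0) (h2 : aW G M p.2 ≠ 0) :
    ∃ x ∈ G.verts \ Uset M, aW G M p.1 = G.mult p.1 x ∧ aW G M p.2 = G.mult p.2 x ∧
      0 < G.mult p.1 x ∧ 0 < G.mult p.2 x := by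
  obtain ⟨x, hxW, hx⟩ := Finset.exists_ne_zero_of_sum_ne_zero h1
  obtain ⟨y, hyW, hy⟩ := Finset.exists_ne_zero_of_sum_ne_zero h2
  have hor : ((p.1, p.2) : V × V) = p ∨ ((p.2, p.1) : V × V) = p := Or.inl rfl
  have hxU : x ∉ Uset M := (Finset.mem_sdiff.mp hxW).2
  have hyU : y ∉ Uset M := (Finset.mem_sdiff.mp hyW).2
  have hxy : x = y := by
    by_contra hne
    exact aug1 hM hmax hp hor hxU hyU hne
      (by rw [G.symm]; exact Nat.pos_of_ne_zero hx) (Nat.pos_of_ne_zero hy)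
  subst hxy
  refine ⟨x, hxW, ?_, ?_, Nat.pos_of_ne_zero hx, Nat.pos_of_ne_zero hy⟩
  · refine Finset.sum_eq_single_of_mem x hxW fun t htW htne => ?_
    by_contra ht
    exact aug1 hM hmax hp hor (Finset.mem_sdiff.mp htW).2 hxU htne
      (by rw [G.symm]; exact Nat.pos_of_ne_zero ht) (Nat.pos_of_ne_zero hy)
  · refine Finset.sum_eq_single_of_mem x hxW fun t htW htne => ?_
    by_contra ht
    exact aug1 hM hmax hp (Or.inr rfl) (Finset.mem_sdiff.mp htW).2 hxU htne
      (by rw [G.symm]; exact Nat.pos_of_ne_zero ht) (Nat.pos_of_ne_zero hx)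

lemma s_le {p : V × V} (hp : p ∈ M) : aW G M p.1 + aW G M p.2 ≤ G.maxDegree := by
  have hv1 : p.1 ∈ G.verts := (pair_mem_verts hM hp).1
  have hv2 : p.2 ∈ G.verts := (pair_mem_verts hM hp).2
  by_cases h1 : aW G M p.1 = 0
  · rw [h1]
    have := (aW_le_degree (G := G) (M := M) (u := p.2)).trans (degree_le hv2)
    omega
  by_cases h2 : aW G M p.2 = 0
  · rw [h2]
    have := (aW_le_degree (G := G) (M := M) (u := p.1)).trans (degree_le hv1)
    omega
  obtain ⟨x, hxW, e1, e2, _, _⟩ := common_nbr hM hmax hp h1 h2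
  rw [e1, e2, G.symm p.1 x, G.symm p.2 x]
  have hxv : x ∈ G.verts := (Finset.mem_sdiff.mp hxW).1
  have hps : ({p.1, p.2} : Finset V) ⊆ G.verts := by
    intro t ht
    rcases Finset.mem_insert.mp ht with rfl | ht
    · exact hv1
    · rw [Finset.mem_singleton.mp ht]; exact hv2
  calc G.mult x p.1 + G.mult x p.2 = ∑ t ∈ ({p.1, p.2} : Finset V), G.mult x t := by
        rw [Finset.sum_pair (pair_ne hM hp)]
    _ ≤ G.degree x := Finset.sum_le_sum_of_subset hps
    _ ≤ G.maxDegree := degree_le hxv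

lemma w2_le {p : V × V} (hp : p ∈ M) : w2 G M p.1 p.2 ≤ 3 * G.maxDegree := by
  have h1 := s_le hM hmax hp
  have h2 := degree_le (G := G) (pair_mem_verts hM hp).1
  have h3 := degree_le (G := G) (pair_mem_verts hM hp).2
  unfold w2; omega

lemma sumU (f : V → ℕ) : ∑ a ∈ Uset M, f a = ∑ p ∈ M, (f p.1 + f p.2) := by
  rw [Uset, Finset.sum_biUnion]
  · refine Finset.sum_congr rfl fun p hp => ?_
    rw [Finset.sum_pair (pair_ne hM hp)]
  · intro p hp q hq hpq
    obtain ⟨a, b, c, d⟩ := hM.2 p hp q hq hpq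
    simp only [Finset.disjoint_left, Finset.mem_insert, Finset.mem_singleton]
    rintro t (rfl | rfl) h <;> rcases h with h | h <;> tauto

lemma sum_eq_w2 : ∑ a ∈ G.verts, ∑ b ∈ G.verts, G.mult a b = ∑ p ∈ M, w2 G M p.1 p.2 := by
  have hU := Uset_subset hM
  have hWW : ∀ a ∈ G.verts \ Uset M, ∀ b ∈ G.verts \ Uset M, G.mult a b = 0 := by
    intro a ha b hb
    rcases eq_or_ne a b with rfl | hab
    · exact G.loopless a
    · exact noedge_unmatched hM hmax (Finset.mem_sdiff.mp ha).2 (Finset.mem_sdiff.mp hb).2 hab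
  have key : ∀ a : V, ∑ b ∈ G.verts, G.mult a b
      = ∑ b ∈ G.verts \ Uset M, G.mult a b + ∑ b ∈ Uset M, G.mult a b :=
    fun a => (Finset.sum_sdiff hU).symm
  calc ∑ a ∈ G.verts, ∑ b ∈ G.verts, G.mult a b
      = ∑ a ∈ G.verts \ Uset M, ∑ b ∈ G.verts, G.mult a b
        + ∑ a ∈ Uset M, ∑ b ∈ G.verts, G.mult a b := (Finset.sum_sdiff hU).symm
    _ = ∑ a ∈ G.verts \ Uset M, ∑ b ∈ Uset M, G.mult a b + ∑ a ∈ Uset M, G.degree a := by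
        congr 1
        refine Finset.sum_congr rfl fun a ha => ?_
        rw [key a, Finset.sum_eq_zero (fun b hb => hWW a ha b hb), zero_add]
    _ = ∑ b ∈ Uset M, ∑ a ∈ G.verts \ Uset M, G.mult b a + ∑ a ∈ Uset M, G.degree a := by
        rw [Finset.sum_comm]
        congr 1
        exact Finset.sum_congr rfl fun b _ => Finset.sum_congr rfl fun a _ => G.symm a b
    _ = ∑ a ∈ Uset M, (aW G M a + G.degree a) := by rw [← Finset.sum_add_distrib]; rfl
    _ = ∑ p ∈ M, ((aW G M p.1 + G.degree p.1) + (aW G M p.2 + G.degree p.2)) :=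
        sumU hM hmax _
    _ = ∑ p ∈ M, w2 G M p.1 p.2 := Finset.sum_congr rfl fun p _ => by unfold w2; omega

lemma heavy_struct {p : V × V} (hp : p ∈ M)
    (hw : 2 * (3 * G.maxDegree / 2) < w2 G M p.1 p.2) :
    (∃ x ∈ G.verts \ Uset M, 0 < G.mult p.1 x ∧ 0 < G.mult p.2 x ∧
        ∀ t, t ≠ p.1 → t ≠ p.2 → G.mult x t = 0) ∧
      (∃ f ∈ M, f ≠ p ∧
        0 < G.mult p.1 f.1 + G.mult p.1 f.2 + G.mult p.2 f.1 + G.mult p.2 f.2) ∧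
      2 ≤ G.maxDegree := by
  set D := G.maxDegree with hD
  have hv1 : p.1 ∈ G.verts := (pair_mem_verts hM hp).1
  have hv2 : p.2 ∈ G.verts := (pair_mem_verts hM hp).2
  have hU1 : p.1 ∈ Uset M := mem_Uset.mpr ⟨p, hp, Or.inl rfl⟩
  have hU2 : p.2 ∈ Uset M := mem_Uset.mpr ⟨p, hp, Or.inr rfl⟩
  have hd1 : G.degree p.1 ≤ D := degree_le hv1
  have hd2 : G.degree p.2 ≤ D := degree_le hv2
  have hs := s_le hM hmax hp
  have hw2 : w2 G M p.1 p.2 = aW G M p.1 + aW G M p.2 + G.degree p.1 + G.degree p.2 := rfl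
  have hm12 : 0 < G.mult p.1 p.2 := hM.1 p hp
  have hm21 : 0 < G.mult p.2 p.1 := by rw [G.symm]; exact hm12
  have ha1 : aW G M p.1 + G.mult p.1 p.2 ≤ G.degree p.1 := aW_add_mult_le hv2 hU2
  have ha2 : aW G M p.2 + G.mult p.2 p.1 ≤ G.degree p.2 := aW_add_mult_le hv1 hU1
  -- arithmetic consequences
  have hDodd : D % 2 = 1 := by omega
  have hsum : aW G M p.1 + aW G M p.2 = D := by omega
  have hdeg1 : G.degree p.1 = D := by omega
  have hdeg2 : G.degree p.2 = D := by omega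
  have hau : aW G M p.1 ≠ 0 := by omega
  have hav : aW G M p.2 ≠ 0 := by omega
  obtain ⟨x, hxW, e1, e2, hpx1, hpx2⟩ := common_nbr hM hmax hp hau hav
  have hxv : x ∈ G.verts := (Finset.mem_sdiff.mp hxW).1
  have hdx : G.degree x ≤ D := degree_le hxv
  have hxrest : ∀ t, t ≠ p.1 → t ≠ p.2 → G.mult x t = 0 := by
    have hps : ({p.1, p.2} : Finset V) ⊆ G.verts := by
      intro t ht
      rcases Finset.mem_insert.mp ht with rfl | ht
      · exact hv1
      · rw [Finset.mem_singleton.mp ht]; exact hv2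
    have hpair : ∑ t ∈ ({p.1, p.2} : Finset V), G.mult x t = D := by
      rw [Finset.sum_pair (pair_ne hM hp), G.symm x p.1, G.symm x p.2, ← e1, ← e2, hsum]
    have hsplit : ∑ t ∈ G.verts, G.mult x t
        = ∑ t ∈ G.verts \ ({p.1, p.2} : Finset V), G.mult x t
          + ∑ t ∈ ({p.1, p.2} : Finset V), G.mult x t := (Finset.sum_sdiff hps).symm
    have hzero : ∑ t ∈ G.verts \ ({p.1, p.2} : Finset V), G.mult x t = 0 := by
      have : G.degree x = ∑ t ∈ G.verts, G.mult x t := rfl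
      omega
    intro t ht1 ht2
    by_cases htv : t ∈ G.verts
    · refine (Finset.sum_eq_zero_iff.mp hzero) t ?_
      simp [Finset.mem_sdiff, htv, ht1, ht2]
    · by_contra h
      exact htv (G.supp x t h).2
  refine ⟨⟨x, hxW, hpx1, hpx2, hxrest⟩, ?_, ?_⟩
  · -- existence of an edge to another matching pair
    have hUdecomp : ∀ u : V, G.degree u
        = aW G M u + ∑ t ∈ Uset M, G.mult u t := by
      intro u
      have : G.degree u = ∑ t ∈ G.verts, G.mult u t := rfl
      rw [this, ← Finset.sum_sdiff (Uset_subset hM)]; rfl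
    have hUsum : ∀ u : V, ∑ t ∈ Uset M, G.mult u t
        = ∑ q ∈ M, (G.mult u q.1 + G.mult u q.2) := fun u => sumU hM hmax _
    have herase : ∀ u : V, ∑ q ∈ M, (G.mult u q.1 + G.mult u q.2)
        = (G.mult u p.1 + G.mult u p.2) + ∑ q ∈ M.erase p, (G.mult u q.1 + G.mult u q.2) := by
      intro u
      rw [← Finset.add_sum_erase M _ hp]
    have hcross : 0 < ∑ q ∈ M.erase p,
        ((G.mult p.1 q.1 + G.mult p.1 q.2) + (G.mult p.2 q.1 + G.mult p.2 q.2)) := by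
      rw [Finset.sum_add_distrib]
      have k1 := hUdecomp p.1
      have k2 := hUdecomp p.2
      rw [hUsum p.1, herase p.1] at k1
      rw [hUsum p.2, herase p.2] at k2
      have l1 : G.mult p.1 p.1 = 0 := G.loopless _
      have l2 : G.mult p.2 p.2 = 0 := G.loopless _
      have l3 : G.mult p.2 p.1 = G.mult p.1 p.2 := G.symm _ _
      omega
    obtain ⟨f, hfm, hfne⟩ := Finset.exists_ne_zero_of_sum_ne_zero hcross.ne'
    exact ⟨f, (Finset.mem_erase.mp hfm).2, (Finset.mem_erase.mp hfm).1, by omega⟩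
  · omega

lemma degree_decomp (u : V) :
    G.degree u = aW G M u + ∑ t ∈ Uset M, G.mult u t := by
  have : G.degree u = ∑ t ∈ G.verts, G.mult u t := rfl
  rw [this, ← Finset.sum_sdiff (Uset_subset hM)]; rfl

lemma count_bound {pp qq : V} (hor : (pp, qq) ∈ M ∨ (qq, pp) ∈ M)
    (T : Finset (V × V)) (hTM : T ⊆ M) (hTne : T.Nonempty)
    (hTnf : ∀ e ∈ T, e ≠ (pp, qq) ∧ e ≠ (qq, pp))
    (hTx : ∀ e ∈ T, ∃ x ∈ G.verts \ Uset M, 0 < G.mult e.1 x ∧ 0 < G.mult e.2 x ∧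
      ∀ t, t ≠ e.1 → t ≠ e.2 → G.mult x t = 0)
    (hTedge : ∀ e ∈ T, 0 < G.mult e.1 pp + G.mult e.2 pp) :
    aW G M pp + aW G M qq + G.degree pp + G.degree qq + T.card + 1 ≤ 3 * G.maxDegree := by
  obtain ⟨fel, hfel, hfor⟩ : ∃ fel ∈ M, (pp, qq) = fel ∨ (qq, pp) = fel := by
    rcases hor with h | h
    · exact ⟨_, h, Or.inl rfl⟩
    · exact ⟨_, h, Or.inr rfl⟩
  obtain ⟨hppqq, hppU, hqqU, hmppqq⟩ := pair_facts hM hfel hfor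
  have hppv : pp ∈ G.verts := Uset_subset hM hppU
  have hqqv : qq ∈ G.verts := Uset_subset hM hqqU
  obtain ⟨e0, he0⟩ := hTne
  have he0M : e0 ∈ M := hTM he0
  have he0f : e0 ≠ fel := by
    rcases hfor with h | h
    · rw [← h]; exact (hTnf e0 he0).1
    · rw [← h]; exact (hTnf e0 he0).2
  obtain ⟨x0, hx0W, h01, h02, h0rest⟩ := hTx e0 he0
  have hx0U : x0 ∉ Uset M := (Finset.mem_sdiff.mp hx0W).2
  -- qq is not an endpoint of e0
  obtain ⟨q1, q2, q3, q4⟩ := pairs_ne hM he0M hfel he0f (Or.inl Prod.mk.eta) hfor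
  -- aW qq = 0
  have haqq : aW G M qq = 0 := by
    refine Finset.sum_eq_zero fun y hyW => ?_
    by_contra hne0
    have hyU : y ∉ Uset M := (Finset.mem_sdiff.mp hyW).2
    have hx0y : x0 ≠ y := by
      rintro rfl
      have : G.mult x0 qq = 0 := h0rest qq (Ne.symm q2) (Ne.symm q4)
      rw [G.symm] at this
      exact hne0 this
    have hedge0 := hTedge e0 he0
    by_cases hc : 0 < G.mult e0.2 pp
    · exact aug2 hM hmax he0M hfel he0f (Or.inl Prod.mk.eta) hfor hx0U hyU hx0y
        (by rw [G.symm]; exact h01) hc (Nat.pos_of_ne_zero hne0)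
    · have hc' : 0 < G.mult e0.1 pp := by omega
      exact aug2 hM hmax he0M hfel he0f (Or.inr Prod.mk.eta) hfor hx0U hyU hx0y
        (by rw [G.symm]; exact h02) hc' (Nat.pos_of_ne_zero hne0)
  -- lower bound on degree pp
  have hfelT : fel ∉ T := by
    intro h
    rcases hfor with hh | hh
    · exact (hTnf fel h).1 hh.symm
    · exact (hTnf fel h).2 hh.symm
  have hins : insert fel T ⊆ M := by
    intro t ht
    rcases Finset.mem_insert.mp ht with rfl | ht
    · exact hfel
    · exact hTM ht
  have hdeglb : aW G M pp + G.mult pp qq + T.card ≤ G.degree pp := by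
    rw [degree_decomp hM hmax pp, sumU hM hmax]
    have h1 : ∑ q ∈ insert fel T, (G.mult pp q.1 + G.mult pp q.2)
        ≤ ∑ q ∈ M, (G.mult pp q.1 + G.mult pp q.2) :=
      Finset.sum_le_sum_of_subset hins
    rw [Finset.sum_insert hfelT] at h1
    have h2 : G.mult pp qq ≤ G.mult pp fel.1 + G.mult pp fel.2 := by
      rcases hfor with hh | hh <;> rw [← hh] <;> simp [G.loopless] <;> omega
    have h3 : T.card ≤ ∑ q ∈ T, (G.mult pp q.1 + G.mult pp q.2) := by
      rw [Finset.card_eq_sum_ones]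
      refine Finset.sum_le_sum fun e he => ?_
      have := hTedge e he
      have s1 : G.mult e.1 pp = G.mult pp e.1 := G.symm _ _
      have s2 : G.mult e.2 pp = G.mult pp e.2 := G.symm _ _
      omega
    omega
  have hd1 : G.degree pp ≤ G.maxDegree := degree_le hppv
  have hd2 : G.degree qq ≤ G.maxDegree := degree_le hqqv
  omega

lemma fiber_bound {f : V × V} (hf : f ∈ M) (T : Finset (V × V)) (hTM : T ⊆ M)
    (hTne : T.Nonempty) (hTf : f ∉ T)
    (hTheavy : ∀ e ∈ T, 2 * (3 * G.maxDegree / 2) < w2 G M e.1 e.2)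
    (hTedge : ∀ e ∈ T,
      0 < G.mult e.1 f.1 + G.mult e.1 f.2 + G.mult e.2 f.1 + G.mult e.2 f.2) :
    w2 G M f.1 f.2 + T.card + 1 ≤ 3 * G.maxDegree := by
  have hx : ∀ e ∈ T, ∃ x ∈ G.verts \ Uset M, 0 < G.mult e.1 x ∧ 0 < G.mult e.2 x ∧
      ∀ t, t ≠ e.1 → t ≠ e.2 → G.mult x t = 0 :=
    fun e he => (heavy_struct hM hmax (hTM he) (hTheavy e he)).1
  have hnf : ∀ e ∈ T, e ≠ (f.1, f.2) ∧ e ≠ (f.2, f.1) := by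
    intro e he
    constructor
    · rw [Prod.mk.eta]; rintro rfl; exact hTf he
    · rintro rfl
      have hef : ((f.2, f.1) : V × V) ≠ f := by
        intro h
        exact pair_ne hM hf (congrArg Prod.snd h)
      exact (hM.2 _ (hTM he) f hf hef).2.1 rfl
  set P := T.filter (fun e => 0 < G.mult e.1 f.1 + G.mult e.2 f.1) with hP
  set Q := T.filter (fun e => 0 < G.mult e.1 f.2 + G.mult e.2 f.2) with hQ
  have hPQ : ∀ e ∈ T, e ∈ P ∨ e ∈ Q := by
    intro e he
    have := hTedge e he
    rw [hP, hQ]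
    simp only [Finset.mem_filter]
    by_cases h : 0 < G.mult e.1 f.1 + G.mult e.2 f.1
    · exact Or.inl ⟨he, h⟩
    · exact Or.inr ⟨he, by omega⟩
  have hw2f : w2 G M f.1 f.2
      = aW G M f.1 + aW G M f.2 + G.degree f.1 + G.degree f.2 := rfl
  by_cases hPall : ∀ e ∈ T, e ∈ P
  · have := count_bound hM hmax (pp := f.1) (qq := f.2)
      (Or.inl (by rw [Prod.mk.eta]; exact hf)) T hTM hTne hnf hx
      (fun e he => (Finset.mem_filter.mp (hPall e he)).2)
    omega
  by_cases hQall : ∀ e ∈ T, e ∈ Q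
  · have := count_bound hM hmax (pp := f.2) (qq := f.1)
      (Or.inr (by rw [Prod.mk.eta]; exact hf)) T hTM hTne
      (fun e he => ⟨(hnf e he).2, (hnf e he).1⟩) hx
      (fun e he => (Finset.mem_filter.mp (hQall e he)).2)
    omega
  exfalso
  push_neg at hPall hQall
  obtain ⟨e', he'T, he'P⟩ := hPall
  obtain ⟨e, heT, heQ⟩ := hQall
  have heP : e ∈ P := (hPQ e heT).resolve_right heQ
  have he'Q : e' ∈ Q := (hPQ e' he'T).resolve_left he'P
  have hee' : e ≠ e' := fun h => he'P (h ▸ heP)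
  have hMe : e ∈ M := hTM heT
  have hMe' : e' ∈ M := hTM he'T
  have hef : e ≠ f := by
    intro h; exact hTf (h ▸ heT)
  have he'f : e' ≠ f := by
    intro h; exact hTf (h ▸ he'T)
  obtain ⟨x, hxW, hx1, hx2, hxr⟩ := hx e heT
  obtain ⟨x', hx'W, hx'1, hx'2, hx'r⟩ := hx e' he'T
  have hxU : x ∉ Uset M := (Finset.mem_sdiff.mp hxW).2
  have hx'U : x' ∉ Uset M := (Finset.mem_sdiff.mp hx'W).2
  have hxx' : x ≠ x' := by
    rintro rfl
    obtain ⟨g1, g2, g3, g4⟩ := pairs_ne hM hMe hMe' hee'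
      (Or.inl Prod.mk.eta) (Or.inl Prod.mk.eta)
    have := hxr e'.1 (Ne.symm g1) (Ne.symm g3)
    rw [G.symm] at hx'1
    omega
  have hEp : 0 < G.mult e.1 f.1 + G.mult e.2 f.1 := (Finset.mem_filter.mp heP).2
  have hEq : 0 < G.mult e'.1 f.2 + G.mult e'.2 f.2 := (Finset.mem_filter.mp he'Q).2
  have horf : ((f.1, f.2) : V × V) = f ∨ ((f.2, f.1) : V × V) = f :=
    Or.inl Prod.mk.eta
  by_cases h1 : 0 < G.mult e.2 f.1
  · by_cases h2 : 0 < G.mult e'.2 f.2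
    · exact aug3 hM hmax hMe hf hMe' hef hee' (Ne.symm he'f)
        (Or.inl Prod.mk.eta) horf (Or.inl Prod.mk.eta) hxU hx'U hxx'
        (by rw [G.symm]; exact hx1) h1 (by rw [G.symm]; exact h2) hx'1
    · have h2' : 0 < G.mult e'.1 f.2 := by omega
      exact aug3 hM hmax hMe hf hMe' hef hee' (Ne.symm he'f)
        (Or.inl Prod.mk.eta) horf (Or.inr Prod.mk.eta) hxU hx'U hxx'
        (by rw [G.symm]; exact hx1) h1 (by rw [G.symm]; exact h2') hx'2
  · have h1' : 0 < G.mult e.1 f.1 := by omega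
    by_cases h2 : 0 < G.mult e'.2 f.2
    · exact aug3 hM hmax hMe hf hMe' hef hee' (Ne.symm he'f)
        (Or.inr Prod.mk.eta) horf (Or.inl Prod.mk.eta) hxU hx'U hxx'
        (by rw [G.symm]; exact hx2) h1' (by rw [G.symm]; exact h2) hx'1
    · have h2' : 0 < G.mult e'.1 f.2 := by omega
      exact aug3 hM hmax hMe hf hMe' hef hee' (Ne.symm he'f)
        (Or.inr Prod.mk.eta) horf (Or.inr Prod.mk.eta) hxU hx'U hxx'
        (by rw [G.symm]; exact hx2) h1' (by rw [G.symm]; exact h2') hx'2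
end aug
end Aux3

open Aux3

/-- A multigraph `G` with `m` edges and `Δ(G) ≥ 1` satisfies
`α'(G) ≥ m/⌊3Δ(G)/2⌋`, i.e. `⌊3Δ(G)/2⌋ · α'(G) ≥ m`. -/
theorem stmt3 {V : Type*} (G : Multigraph V) (m : ℕ)
    (hm : G.edgeCount = m) (hΔ : 1 ≤ G.maxDegree) :
    (m : ℚ) / ((3 * G.maxDegree / 2 : ℕ) : ℚ) ≤ (G.matchingNumber : ℚ) ∧
      m ≤ 3 * G.maxDegree / 2 * G.matchingNumber := by
  classical
  set D := G.maxDegree with hD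
  set c := 3 * D / 2 with hc
  -- a maximum matching
  have h0 : G.IsMatching (∅ : Finset (V × V)) := ⟨by simp, by simp⟩
  have hbdd : BddAbove {n | ∃ N : Finset (V × V), G.IsMatching N ∧ N.card = n} := by
    refine ⟨(G.verts ×ˢ G.verts).card, ?_⟩
    rintro n ⟨N, hN, rfl⟩
    apply Finset.card_le_card
    intro p hp
    exact Finset.mem_product.mpr (pair_mem_verts hN hp)
  have hmem : G.matchingNumber ∈ {n | ∃ N : Finset (V × V), G.IsMatching N ∧ N.card = n} :=
    Nat.sSup_mem ⟨0, ⟨∅, h0, rfl⟩⟩ hbdd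
  obtain ⟨M, hM, hcard⟩ := hmem
  have hmax : ∀ N, G.IsMatching N → N.card ≤ M.card := by
    intro N hN
    rw [hcard]
    exact le_csSup hbdd ⟨N, hN, rfl⟩
  -- double counting
  have hsum := sum_eq_w2 hM hmax
  have heven := even_mult_sum G G.verts
  have hm2 : 2 * m = ∑ p ∈ M, w2 G M p.1 p.2 := by
    rw [← hsum]
    obtain ⟨t, ht⟩ := heven
    have : G.edgeCount = (∑ u ∈ G.verts, ∑ v ∈ G.verts, G.mult u v) / 2 := rfl
    omega
  -- heavy pairs and their targets
  set Heavy := M.filter (fun p => 2 * c < w2 G M p.1 p.2) with hHeavy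
  have hφex : ∀ e ∈ Heavy, ∃ g, g ∈ M ∧ g ≠ e ∧
      0 < G.mult e.1 g.1 + G.mult e.1 g.2 + G.mult e.2 g.1 + G.mult e.2 g.2 := by
    intro e he
    rw [hHeavy, Finset.mem_filter] at he
    obtain ⟨_, ⟨g, hg, hgne, hgpos⟩, _⟩ := heavy_struct hM hmax he.1 he.2
    exact ⟨g, hg, hgne, hgpos⟩
  set φ : (V × V) → (V × V) := fun e =>
    if h : ∃ g, g ∈ M ∧ g ≠ e ∧
        0 < G.mult e.1 g.1 + G.mult e.1 g.2 + G.mult e.2 g.1 + G.mult e.2 g.2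
    then h.choose else e with hφdef
  have hφ : ∀ e ∈ Heavy, (φ e) ∈ M ∧ (φ e) ≠ e ∧
      0 < G.mult e.1 (φ e).1 + G.mult e.1 (φ e).2
        + G.mult e.2 (φ e).1 + G.mult e.2 (φ e).2 := by
    intro e he
    have hex := hφex e he
    rw [hφdef]
    simp only [dif_pos hex]
    exact hex.choose_spec
  have hφM : ∀ e ∈ Heavy, φ e ∈ M := fun e he => (hφ e he).1
  have hfibcount : Heavy.card = ∑ f ∈ M, (Heavy.filter (fun e => φ e = f)).card :=
    Finset.card_eq_sum_card_fiberwise hφM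
  have hkey : ∀ f ∈ M, w2 G M f.1 f.2 + (Heavy.filter (fun e => φ e = f)).card
      ≤ 2 * c + (if 2 * c < w2 G M f.1 f.2 then 1 else 0) := by
    intro f hf
    have h3D : 3 * D ≤ 2 * c + 1 := by omega
    rcases (Heavy.filter (fun e => φ e = f)).eq_empty_or_nonempty with hTe | hTne
    · rw [hTe]
      simp only [Finset.card_empty, add_zero]
      by_cases hh : 2 * c < w2 G M f.1 f.2
      · rw [if_pos hh]
        have := w2_le hM hmax hf
        omega
      · rw [if_neg hh]
        omega
    · have hTM : Heavy.filter (fun e => φ e = f) ⊆ M := by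
        intro e he
        exact Finset.filter_subset _ _ (Finset.filter_subset _ _ he)
      have hTf : f ∉ Heavy.filter (fun e => φ e = f) := by
        intro h
        have h1 := Finset.mem_filter.mp h
        exact (hφ f h1.1).2.1 h1.2
      have hTheavy : ∀ e ∈ Heavy.filter (fun e => φ e = f),
          2 * (3 * G.maxDegree / 2) < w2 G M e.1 e.2 := by
        intro e he
        have h1 := Finset.mem_filter.mp (Finset.mem_filter.mp he).1
        exact h1.2
      have hTedge : ∀ e ∈ Heavy.filter (fun e => φ e = f),
          0 < G.mult e.1 f.1 + G.mult e.1 f.2 + G.mult e.2 f.1 + G.mult e.2 f.2 := by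
        intro e he
        have h1 := Finset.mem_filter.mp he
        have h2 := (hφ e h1.1).2.2
        rw [h1.2] at h2
        exact h2
      have hbound := fiber_bound hM hmax hf _ hTM hTne hTf hTheavy hTedge
      have : 3 * G.maxDegree = 3 * D := rfl
      by_cases hh : 2 * c < w2 G M f.1 f.2 <;> [rw [if_pos hh]; rw [if_neg hh]] <;> omega
  have hmain : ∑ p ∈ M, w2 G M p.1 p.2 ≤ 2 * c * M.card := by
    have h1 : ∑ p ∈ M, w2 G M p.1 p.2 + Heavy.card
        = ∑ f ∈ M, (w2 G M f.1 f.2 + (Heavy.filter (fun e => φ e = f)).card) := by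
      rw [Finset.sum_add_distrib, hfibcount]
    have h2 : ∑ f ∈ M, (w2 G M f.1 f.2 + (Heavy.filter (fun e => φ e = f)).card)
        ≤ ∑ f ∈ M, (2 * c + (if 2 * c < w2 G M f.1 f.2 then 1 else 0)) :=
      Finset.sum_le_sum hkey
    have h3 : ∑ f ∈ M, (2 * c + (if 2 * c < w2 G M f.1 f.2 then 1 else 0))
        = 2 * c * M.card + Heavy.card := by
      rw [Finset.sum_add_distrib, Finset.sum_const, smul_eq_mul, hHeavy,
        Finset.card_filter]
      ring_nf
    omega
  have hfinal : m ≤ c * M.card := by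
    have h4 : 2 * m ≤ 2 * (c * M.card) := by
      rw [hm2]
      calc ∑ p ∈ M, w2 G M p.1 p.2 ≤ 2 * c * M.card := hmain
        _ = 2 * (c * M.card) := by ring
    exact Nat.le_of_mul_le_mul_left h4 (by norm_num)
  have hfinal' : m ≤ c * G.matchingNumber := by rw [← hcard]; exact hfinal
  refine ⟨?_, hfinal'⟩
  have hc1 : 1 ≤ c := by omega
  have hcpos : (0 : ℚ) < ((c : ℕ) : ℚ) := by
    exact_mod_cast Nat.lt_of_lt_of_le Nat.zero_lt_one hc1
  rw [div_le_iff₀ hcpos]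
  have : (m : ℚ) ≤ ((c * G.matchingNumber : ℕ) : ℚ) := by exact_mod_cast hfinal'
  rw [Nat.cast_mul] at this
  calc (m : ℚ) ≤ (c : ℚ) * (G.matchingNumber : ℚ) := this
    _ = (G.matchingNumber : ℚ) * (c : ℚ) := by ring
end

section
/- For even k ≥ 2, let H be a k-uniform hypergraph on n vertices with m edges satisfying τ(H) = (n + (k/2)·m)/(3k/2). Then every vertex of H has degree at most 2, i.e., Δ(H) ≤ 2. -/
/-- A hypergraph: a finite vertex set together with a finite (indexed, hence
multiset-like) family of edges, each edge a subset of the vertex set. -/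
structure FinHypergraph (V : Type*) where
  verts : Finset V
  numEdges : ℕ
  edge : Fin numEdges → Finset V
  edge_sub : ∀ i, edge i ⊆ verts

namespace FinHypergraph

variable {V : Type*} [DecidableEq V]

/-- `H` is `k`-uniform if every edge has exactly `k` vertices. -/
def Uniform (H : FinHypergraph V) (k : ℕ) : Prop :=
  ∀ i, (H.edge i).card = k

/-- A transversal: a set of vertices meeting every edge. -/
def IsTransversal (H : FinHypergraph V) (T : Finset V) : Prop :=
  T ⊆ H.verts ∧ ∀ i, (T ∩ H.edge i).Nonempty

/-- The transversal number `τ(H)`: minimum size of a transversal. -/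
noncomputable def tau (H : FinHypergraph V) : ℕ :=
  sInf {n | ∃ T : Finset V, H.IsTransversal T ∧ T.card = n}

/-- The degree of a vertex: the number of edges containing it. -/
def degree (H : FinHypergraph V) (v : V) : ℕ :=
  (Finset.univ.filter fun i => v ∈ H.edge i).card

/-- Two vertices are adjacent if some edge contains both. -/
def Adj (H : FinHypergraph V) (u v : V) : Prop :=
  u ≠ v ∧ ∃ i, u ∈ H.edge i ∧ v ∈ H.edge i

/-- `H` is connected if every pair of vertices is joined by a sequence of
consecutively adjacent vertices. -/
def Connected (H : FinHypergraph V) : Prop :=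
  ∀ u ∈ H.verts, ∀ v ∈ H.verts, Relation.ReflTransGen H.Adj u v

/-- `H` is (a copy of) `E_k`: `k` vertices and exactly one edge. -/
def IsEk (H : FinHypergraph V) (k : ℕ) : Prop :=
  H.verts.card = k ∧ H.numEdges = 1 ∧ ∀ i, H.edge i = H.verts

/-- `H` is (a copy of) the generalized triangle `T_k`: the vertex set is the
disjoint union of sets `A`, `B`, `C`, `D` with `|A| = ⌈k/2⌉`,
`|B| = |C| = ⌊k/2⌋`, `|D| = ⌈k/2⌉ - ⌊k/2⌋`, and the edges are exactly
`A ∪ B`, `A ∪ C` and `B ∪ C ∪ D`. -/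
def IsTk (H : FinHypergraph V) (k : ℕ) : Prop :=
  ∃ A B C D : Finset V,
    A.card = (k + 1) / 2 ∧ B.card = k / 2 ∧ C.card = k / 2 ∧
    D.card = (k + 1) / 2 - k / 2 ∧
    Disjoint A B ∧ Disjoint A C ∧ Disjoint A D ∧
    Disjoint B C ∧ Disjoint B D ∧ Disjoint C D ∧
    H.verts = A ∪ B ∪ C ∪ D ∧
    H.numEdges = 3 ∧
    (List.ofFn H.edge : Multiset (Finset V)) = {A ∪ B, A ∪ C, B ∪ C ∪ D}

end FinHypergraph

/-! Chvátal and McDiarmid's bound `3r·τ(H) ≤ n + r·m` for `2r`-uniform `H` is proved by induction: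
deleting a vertex of degree `d ≥ 3` lowers `τ` by at most one, `n` by one and `r·m` by `r·d ≥ 3r`,
so the bound even becomes strict. Hence an extremal hypergraph has maximum degree at most `2`,
which is also the base case of the induction. There the hypergraph is dual to a multigraph:
its edges are the nodes and each vertex of degree `2` joins the two edges through it. A matching
`S` of that multigraph gives a transversal of size `m - |S|`, and a multigraph of maximum degree
`K` has at most `3K/2` times as many edges as a maximum matching. -/

open Finset

section MultigraphMatching

/- A family `E : α → Finset ι` together with `W : Finset α` stands for the multigraph on `ι` whose
edges are the `w ∈ W`, the edge `w` joining the nodes in `E w`. -/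
variable {α ι : Type*} {E : α → Finset ι} {W S : Finset α}

structure IsMaxMatching (E : α → Finset ι) (W S : Finset α) : Prop where
  subset : S ⊆ W
  pairwiseDisjoint : (S : Set α).PairwiseDisjoint E
  card_le : ∀ S' ⊆ W, (S' : Set α).PairwiseDisjoint E → S'.card ≤ S.card

lemma exists_isMaxMatching (E : α → Finset ι) (W : Finset α) : ∃ S, IsMaxMatching E W S := by
  classical
  obtain ⟨S, hS, hmax⟩ := (W.powerset.filter fun S : Finset α => (S : Set α).PairwiseDisjoint E)
    |>.exists_max_image card ⟨∅, by simp⟩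
  rw [mem_filter, mem_powerset] at hS
  exact ⟨S, hS.1, hS.2, fun S' hW hE => hmax S' (mem_filter.2 ⟨mem_powerset.2 hW, hE⟩)⟩

variable [DecidableEq ι]

lemma disjoint_of_inter_biUnion_subset (hS : (S : Set α).PairwiseDisjoint E) {s t w : α}
    (hs : s ∈ S) (ht : t ∈ S) (hts : t ≠ s) (hw : E w ∩ S.biUnion E ⊆ E s) :
    Disjoint (E w) (E t) :=
  disjoint_left.2 fun _ haw hat =>
    disjoint_left.1 (hS ht hs hts) hat (hw (mem_inter.2 ⟨haw, mem_biUnion.2 ⟨_, ht, hat⟩⟩))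

lemma notMem_of_inter_biUnion_eq_singleton (hS : (S : Set α).PairwiseDisjoint E) {s w : α}
    {i j : ι} (hs : s ∈ S) (hij : i ≠ j) (hi : i ∈ E s) (hj : j ∈ E s)
    (hw : E w ∩ S.biUnion E = {i}) : w ∉ S := by
  intro hwS
  rw [inter_eq_left.2 (subset_biUnion_of_mem E hwS)] at hw
  by_cases hws : w = s
  · subst hws
    exact hij (mem_singleton.1 (hw ▸ hj)).symm
  · exact disjoint_left.1 (hS hwS hs hws) (hw ▸ mem_singleton_self i) hi

lemma sum_card_filter_mem_eq_sum_card_inter (E : α → Finset ι) (I : Finset ι) (T : Finset α) :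
    ∑ i ∈ I, (T.filter (i ∈ E ·)).card = ∑ w ∈ T, (E w ∩ I).card := by
  have := sum_card_bipartiteAbove_eq_sum_card_bipartiteBelow (r := fun i w => i ∈ E w) (s := I)
    (t := T)
  simp only [bipartiteAbove, bipartiteBelow, filter_mem_eq_inter] at this
  simpa only [inter_comm I] using this

def singlyCoveredAt (E : α → Finset ι) (W S : Finset α) (x : ι) : Finset α :=
  (W.filter fun w => (E w ∩ S.biUnion E).card = 1).filter (x ∈ E ·)

lemma inter_biUnion_eq_singleton_of_mem_singlyCoveredAt {x : ι} {w : α}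
    (hx : x ∈ S.biUnion E) (hw : w ∈ singlyCoveredAt E W S x) : E w ∩ S.biUnion E = {x} := by
  simp only [singlyCoveredAt, mem_filter] at hw
  obtain ⟨y, hy⟩ := card_eq_one.1 hw.1.2
  have hxy : x = y := mem_singleton.1 (hy ▸ mem_inter.2 ⟨hw.2, hx⟩)
  rw [hy, hxy]

lemma card_sdiff_biUnion_of_mem_singlyCoveredAt (hW : ∀ w ∈ W, (E w).card = 2) {x : ι} {w : α}
    (hw : w ∈ singlyCoveredAt E W S x) : (E w \ S.biUnion E).card = 1 := by
  simp only [singlyCoveredAt, mem_filter] at hw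
  have := card_sdiff_add_card_inter (E w) (S.biUnion E)
  rw [hw.1.2, hW w hw.1.1] at this
  omega

namespace IsMaxMatching

variable [DecidableEq α] {K : ℕ}

lemma inter_biUnion_nonempty (hS : IsMaxMatching E W S) {w : α} (hw : w ∈ W)
    (hne : (E w).Nonempty) : (E w ∩ S.biUnion E).Nonempty := by
  by_contra h
  rw [not_nonempty_iff_eq_empty, ← disjoint_iff_inter_eq_empty] at h
  have hdisj : ∀ t ∈ S, Disjoint (E w) (E t) :=
    fun t ht => h.mono_right (subset_biUnion_of_mem E ht)
  have hwS : w ∉ S := fun hwS => hne.ne_empty (disjoint_self.1 (hdisj w hwS))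
  have := hS.card_le (insert w S) (insert_subset hw hS.subset) <| by
    rw [coe_insert]
    exact hS.pairwiseDisjoint.insert fun t ht _ => hdisj t ht
  rw [card_insert_of_notMem hwS] at this
  omega

/-- No augmenting path of length three: two unmatched edges hanging off the two ends of a
matching edge must share their other endpoint. -/
lemma not_disjoint_sdiff_biUnion (hS : IsMaxMatching E W S) {s w₁ w₂ : α} {i j : ι}
    (hs : s ∈ S) (hij : i ≠ j) (hi : i ∈ E s) (hj : j ∈ E s) (hw₁ : w₁ ∈ W) (hw₂ : w₂ ∈ W)
    (h₁ : E w₁ ∩ S.biUnion E = {i}) (h₂ : E w₂ ∩ S.biUnion E = {j}) :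
    ¬ Disjoint (E w₁ \ S.biUnion E) (E w₂ \ S.biUnion E) := by
  intro hout
  have hPD := hS.pairwiseDisjoint
  have hw₁S := notMem_of_inter_biUnion_eq_singleton hPD hs hij hi hj h₁
  have hw₂S := notMem_of_inter_biUnion_eq_singleton hPD hs hij.symm hj hi h₂
  have hw₁₂ : w₁ ≠ w₂ := by
    rintro rfl
    exact hij (singleton_injective (h₁.symm.trans h₂))
  have h₁₂ : Disjoint (E w₁) (E w₂) := by
    rw [disjoint_left]
    intro a ha₁ ha₂
    by_cases haI : a ∈ S.biUnion E
    · have e₁ : a ∈ ({i} : Finset ι) := h₁ ▸ mem_inter.2 ⟨ha₁, haI⟩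
      have e₂ : a ∈ ({j} : Finset ι) := h₂ ▸ mem_inter.2 ⟨ha₂, haI⟩
      exact hij ((mem_singleton.1 e₁).symm.trans (mem_singleton.1 e₂))
    · exact disjoint_left.1 hout (mem_sdiff.2 ⟨ha₁, haI⟩) (mem_sdiff.2 ⟨ha₂, haI⟩)
  have hsub₁ : E w₁ ∩ S.biUnion E ⊆ E s := h₁ ▸ singleton_subset_iff.2 hi
  have hsub₂ : E w₂ ∩ S.biUnion E ⊆ E s := h₂ ▸ singleton_subset_iff.2 hj
  have hPD' : ((insert w₁ (insert w₂ (S.erase s)) : Finset α) : Set α).PairwiseDisjoint E := by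
    rw [coe_insert, coe_insert, coe_erase]
    refine (hPD.subset Set.sdiff_subset |>.insert ?_).insert ?_
    · rintro t ⟨ht, hts⟩ -
      exact disjoint_of_inter_biUnion_subset hPD hs ht hts hsub₂
    · rintro t (rfl | ⟨ht, hts⟩) -
      · exact h₁₂
      · exact disjoint_of_inter_biUnion_subset hPD hs ht hts hsub₁
  have hcard := hS.card_le _ (insert_subset hw₁ (insert_subset hw₂
    ((erase_subset s S).trans hS.subset))) hPD'
  rw [card_insert_of_notMem (by simp [hw₁₂, hw₁S]), card_insert_of_notMem (by simp [hw₂S]),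
    card_erase_of_mem hs] at hcard
  have := card_pos.2 ⟨s, hs⟩
  omega

lemma sdiff_biUnion_eq_of_mem_singlyCoveredAt (hS : IsMaxMatching E W S)
    (hW : ∀ w ∈ W, (E w).card = 2) {s w w' : α} {i j : ι} (hs : s ∈ S) (hij : i ≠ j)
    (hi : i ∈ E s) (hj : j ∈ E s) (hw : w ∈ singlyCoveredAt E W S i)
    (hw' : w' ∈ singlyCoveredAt E W S j) : E w \ S.biUnion E = E w' \ S.biUnion E := by
  have hmemW : ∀ {x u}, u ∈ singlyCoveredAt E W S x → u ∈ W :=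
    fun hu => (mem_filter.1 (mem_filter.1 hu).1).1
  have h := hS.not_disjoint_sdiff_biUnion hs hij hi hj (hmemW hw) (hmemW hw')
    (inter_biUnion_eq_singleton_of_mem_singlyCoveredAt (mem_biUnion.2 ⟨s, hs, hi⟩) hw)
    (inter_biUnion_eq_singleton_of_mem_singlyCoveredAt (mem_biUnion.2 ⟨s, hs, hj⟩) hw')
  obtain ⟨y, hy⟩ := card_eq_one.1 (card_sdiff_biUnion_of_mem_singlyCoveredAt hW hw)
  obtain ⟨z, hz⟩ := card_eq_one.1 (card_sdiff_biUnion_of_mem_singlyCoveredAt hW hw')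
  rw [hy, hz, disjoint_singleton, not_not] at h
  rw [hy, hz, h]

/-- The singly covered edges at the two ends of a matching edge all pass through one common
node, whose degree bounds their number. -/
lemma card_singlyCoveredAt_add_card_le (hS : IsMaxMatching E W S)
    (hW : ∀ w ∈ W, (E w).card = 2) (hK : ∀ x, (W.filter (x ∈ E ·)).card ≤ K) {s : α} {i j : ι}
    (hs : s ∈ S) (hij : i ≠ j) (hi : i ∈ E s) (hj : j ∈ E s) :
    (singlyCoveredAt E W S i).card + (singlyCoveredAt E W S j).card ≤ K := by
  have hsub : ∀ x, singlyCoveredAt E W S x ⊆ W.filter (x ∈ E ·) :=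
    fun x => filter_subset_filter _ (filter_subset _ _)
  rcases (singlyCoveredAt E W S i).eq_empty_or_nonempty with hA | ⟨w₁, hw₁⟩
  · simpa [hA] using (card_le_card (hsub j)).trans (hK j)
  rcases (singlyCoveredAt E W S j).eq_empty_or_nonempty with hB | ⟨w₂, hw₂⟩
  · simpa [hB] using (card_le_card (hsub i)).trans (hK i)
  have hcommon : ∀ w ∈ singlyCoveredAt E W S i ∪ singlyCoveredAt E W S j,
      E w \ S.biUnion E = E w₂ \ S.biUnion E := by
    intro w hw
    rcases mem_union.1 hw with hw | hw
    · exact hS.sdiff_biUnion_eq_of_mem_singlyCoveredAt hW hs hij hi hj hw hw₂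
    · exact (hS.sdiff_biUnion_eq_of_mem_singlyCoveredAt hW hs hij hi hj hw₁ hw).symm.trans
        (hS.sdiff_biUnion_eq_of_mem_singlyCoveredAt hW hs hij hi hj hw₁ hw₂)
  obtain ⟨y, hy⟩ := card_pos.1 (card_sdiff_biUnion_of_mem_singlyCoveredAt hW hw₂ ▸ one_pos)
  have hunion : singlyCoveredAt E W S i ∪ singlyCoveredAt E W S j ⊆ W :=
    union_subset ((hsub i).trans (filter_subset _ _)) ((hsub j).trans (filter_subset _ _))
  have hdisj : Disjoint (singlyCoveredAt E W S i) (singlyCoveredAt E W S j) :=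
    disjoint_left.2 fun w hwi hwj => hij <| singleton_injective <|
      (inter_biUnion_eq_singleton_of_mem_singlyCoveredAt (mem_biUnion.2 ⟨s, hs, hi⟩) hwi).symm.trans
        (inter_biUnion_eq_singleton_of_mem_singlyCoveredAt (mem_biUnion.2 ⟨s, hs, hj⟩) hwj)
  calc _ = (singlyCoveredAt E W S i ∪ singlyCoveredAt E W S j).card :=
        (card_union_of_disjoint hdisj).symm
    _ ≤ (W.filter (y ∈ E ·)).card := card_le_card fun w hw =>
        mem_filter.2 ⟨hunion hw, (mem_sdiff.1 ((hcommon w hw).symm ▸ hy)).1⟩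
    _ ≤ K := hK y

/-- Each `w ∈ W` has one or two ends covered by the matching, so
`2 = #(E w ∩ I) + [#(E w ∩ I) = 1]`; regrouped along the matching edges, each contributes at most
`3K`. -/
theorem two_mul_card_le (hS : IsMaxMatching E W S) (hW : ∀ w ∈ W, (E w).card = 2)
    (hK : ∀ x, (W.filter (x ∈ E ·)).card ≤ K) : 2 * W.card ≤ 3 * K * S.card := by
  set I := S.biUnion E
  set W₁ := W.filter fun w => (E w ∩ I).card = 1
  have hcount : ∀ w ∈ W, 2 = (E w ∩ I).card + if (E w ∩ I).card = 1 then 1 else 0 := by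
    intro w hw
    have h₁ : 0 < (E w ∩ I).card :=
      card_pos.2 (hS.inter_biUnion_nonempty hw (card_pos.1 (by rw [hW w hw]; norm_num)))
    have h₂ : (E w ∩ I).card ≤ 2 := hW w hw ▸ card_le_card inter_subset_left
    split_ifs <;> omega
  have hW₁ : ∑ x ∈ I, (singlyCoveredAt E W S x).card = W₁.card := by
    rw [card_eq_sum_ones]
    exact (sum_card_filter_mem_eq_sum_card_inter E I W₁).trans
      (sum_congr rfl fun w hw => (mem_filter.1 hw).2)
  have hpair : ∀ s ∈ S, ∑ x ∈ E s,
      ((singlyCoveredAt E W S x).card + (W.filter (x ∈ E ·)).card) ≤ 3 * K := by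
    intro s hs
    obtain ⟨i, j, hij, hs₂⟩ := card_eq_two.1 (hW s (hS.subset hs))
    have := hS.card_singlyCoveredAt_add_card_le hW hK hs hij (by simp [hs₂]) (by simp [hs₂])
    have := hK i
    have := hK j
    rw [hs₂, sum_pair hij]
    omega
  calc 2 * W.card = ∑ w ∈ W, 2 := by rw [sum_const, smul_eq_mul, mul_comm]
    _ = ∑ w ∈ W, (E w ∩ I).card + W₁.card := by
        rw [sum_congr rfl hcount, sum_add_distrib, card_filter]
    _ = ∑ x ∈ I, ((singlyCoveredAt E W S x).card + (W.filter (x ∈ E ·)).card) := by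
        rw [sum_add_distrib, hW₁, sum_card_filter_mem_eq_sum_card_inter, add_comm]
    _ = ∑ s ∈ S, ∑ x ∈ E s, ((singlyCoveredAt E W S x).card + (W.filter (x ∈ E ·)).card) :=
        sum_biUnion hS.pairwiseDisjoint
    _ ≤ ∑ s ∈ S, 3 * K := sum_le_sum hpair
    _ = 3 * K * S.card := by rw [sum_const, smul_eq_mul, mul_comm]

end IsMaxMatching

end MultigraphMatching

namespace FinHypergraph

variable {V : Type*} {H : FinHypergraph V}

lemma edge_nonempty_of_uniform {k : ℕ} (huni : H.Uniform k) (hk : 0 < k) (i : Fin H.numEdges) :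
    (H.edge i).Nonempty :=
  card_pos.1 (huni i ▸ hk)

variable [DecidableEq V]

def edgesOf (H : FinHypergraph V) (v : V) : Finset (Fin H.numEdges) :=
  univ.filter (v ∈ H.edge ·)

@[simp]
lemma mem_edgesOf {v : V} {i : Fin H.numEdges} : i ∈ H.edgesOf v ↔ v ∈ H.edge i := by
  simp [edgesOf]

lemma tau_le_card {T : Finset V} (hT : H.IsTransversal T) : H.tau ≤ T.card :=
  Nat.sInf_le ⟨T, hT, rfl⟩

lemma exists_isTransversal_card_eq_tau (hne : ∀ i, (H.edge i).Nonempty) :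
    ∃ T, H.IsTransversal T ∧ T.card = H.tau :=
  Nat.sInf_mem (s := {n | ∃ T, H.IsTransversal T ∧ T.card = n}) ⟨_, H.verts,
    ⟨subset_rfl, fun i => by rw [inter_eq_right.2 (H.edge_sub i)]; exact hne i⟩, rfl⟩

lemma sum_degree_eq_sum_card_edge (H : FinHypergraph V) :
    ∑ v ∈ H.verts, H.degree v = ∑ i, (H.edge i).card := by
  have := sum_card_bipartiteAbove_eq_sum_card_bipartiteBelow (r := fun v i => v ∈ H.edge i)
    (s := H.verts) (t := univ)
  simp only [bipartiteBelow, filter_mem_eq_inter, inter_eq_right.2 (H.edge_sub _)] at this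
  exact this

/-- Picking the `|S|` vertices of a dual matching `S` and one vertex in each of the
`m - 2|S|` edges it misses gives a transversal. -/
lemma tau_add_card_le_numEdges (hne : ∀ i, (H.edge i).Nonempty) {S : Finset V}
    (hS : S ⊆ H.verts) (hdisj : (S : Set V).PairwiseDisjoint H.edgesOf)
    (h₂ : ∀ s ∈ S, (H.edgesOf s).card = 2) : H.tau + S.card ≤ H.numEdges := by
  set I := S.biUnion H.edgesOf
  choose pick hpick using hne
  have hT : H.IsTransversal (S ∪ Iᶜ.image pick) := by
    refine ⟨union_subset hS (image_subset_iff.2 fun i _ => H.edge_sub i (hpick i)), fun i => ?_⟩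
    by_cases hi : i ∈ I
    · obtain ⟨s, hs, his⟩ := mem_biUnion.1 hi
      exact ⟨s, mem_inter.2 ⟨mem_union_left _ hs, mem_edgesOf.1 his⟩⟩
    · exact ⟨pick i, mem_inter.2
        ⟨mem_union_right _ (mem_image_of_mem pick (mem_compl.2 hi)), hpick i⟩⟩
  have hI : I.card = 2 * S.card := by
    rw [card_biUnion hdisj, sum_congr rfl h₂, sum_const, smul_eq_mul, mul_comm]
  have hIc := card_compl_add_card I
  rw [Fintype.card_fin] at hIc
  have hT_card : (S ∪ Iᶜ.image pick).card ≤ S.card + Iᶜ.card :=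
    (card_union_le _ _).trans (Nat.add_le_add_left card_image_le _)
  have := tau_le_card hT
  omega

lemma numEdges_mul_le {k : ℕ} (huni : H.Uniform k) (hdeg : ∀ v ∈ H.verts, H.degree v ≤ 2) :
    H.numEdges * k ≤ H.verts.card + (H.verts.filter (H.degree · = 2)).card := by
  calc H.numEdges * k = ∑ i, (H.edge i).card := by
        rw [sum_congr rfl fun i _ => huni i, sum_const, card_univ, Fintype.card_fin, smul_eq_mul]
    _ = ∑ v ∈ H.verts, H.degree v := H.sum_degree_eq_sum_card_edge.symm
    _ ≤ ∑ v ∈ H.verts, (1 + if H.degree v = 2 then 1 else 0) := sum_le_sum fun v hv => by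
        have := hdeg v hv
        split_ifs <;> omega
    _ = _ := by rw [sum_add_distrib, card_filter, sum_const, smul_eq_mul, mul_one]

lemma three_mul_tau_le_of_degree_le_two {r : ℕ} (hr : 0 < r) (huni : H.Uniform (2 * r))
    (hdeg : ∀ v ∈ H.verts, H.degree v ≤ 2) : 3 * r * H.tau ≤ H.verts.card + r * H.numEdges := by
  set W := H.verts.filter (H.degree · = 2)
  obtain ⟨S, hS⟩ := exists_isMaxMatching H.edgesOf W
  have hW : ∀ w ∈ W, (H.edgesOf w).card = 2 := fun w hw => (mem_filter.1 hw).2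
  have hK : ∀ i, (W.filter (i ∈ H.edgesOf ·)).card ≤ 2 * r := fun i =>
    huni i ▸ card_le_card fun w hw => mem_edgesOf.1 (mem_filter.1 hw).2
  have hmatch := hS.two_mul_card_le hW hK
  have htau := tau_add_card_le_numEdges (edge_nonempty_of_uniform huni (by omega))
    (hS.subset.trans (filter_subset _ _)) hS.pairwiseDisjoint fun s hs => hW s (hS.subset hs)
  have hcount : H.numEdges * (2 * r) ≤ H.verts.card + W.card := numEdges_mul_le huni hdeg
  have := Nat.mul_le_mul_left (3 * r) htau
  linarith

def deleteVertex (H : FinHypergraph V) (v : V) : FinHypergraph V where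
  verts := H.verts.erase v
  numEdges := (H.edgesOf v)ᶜ.card
  edge j := H.edge ((H.edgesOf v)ᶜ.orderIsoOfFin rfl j)
  edge_sub j := by
    have hv := ((H.edgesOf v)ᶜ.orderIsoOfFin rfl j).2
    rw [mem_compl, mem_edgesOf] at hv
    exact subset_erase.2 ⟨H.edge_sub _, hv⟩

lemma deleteVertex_uniform {k : ℕ} {v : V} (huni : H.Uniform k) :
    (H.deleteVertex v).Uniform k :=
  fun _ => huni _

lemma card_verts_deleteVertex_add_one {v : V} (hv : v ∈ H.verts) :
    (H.deleteVertex v).verts.card + 1 = H.verts.card :=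
  card_erase_add_one hv

lemma numEdges_deleteVertex_add_degree (H : FinHypergraph V) (v : V) :
    (H.deleteVertex v).numEdges + H.degree v = H.numEdges := by
  have := card_compl_add_card (H.edgesOf v)
  rwa [Fintype.card_fin] at this

lemma tau_le_tau_deleteVertex_add_one {v : V} (hv : v ∈ H.verts)
    (hne : ∀ i, (H.edge i).Nonempty) : H.tau ≤ (H.deleteVertex v).tau + 1 := by
  obtain ⟨T, hT, hTcard⟩ := (H.deleteVertex v).exists_isTransversal_card_eq_tau fun _ => hne _
  have hT' : H.IsTransversal (insert v T) := by
    refine ⟨insert_subset hv (hT.1.trans (erase_subset _ _)), fun i => ?_⟩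
    by_cases hvi : v ∈ H.edge i
    · exact ⟨v, mem_inter.2 ⟨mem_insert_self _ _, hvi⟩⟩
    · have hi : i ∈ (H.edgesOf v)ᶜ := by simpa using hvi
      obtain ⟨x, hx⟩ := hT.2 (((H.edgesOf v)ᶜ.orderIsoOfFin rfl).symm ⟨i, hi⟩)
      simp only [deleteVertex, OrderIso.apply_symm_apply, mem_inter] at hx
      exact ⟨x, mem_inter.2 ⟨mem_insert_of_mem hx.1, hx.2⟩⟩
  exact (tau_le_card hT').trans (hTcard ▸ card_insert_le v T)

lemma three_mul_tau_lt_of_three_le_degree {r : ℕ} (hr : 0 < r) (huni : H.Uniform (2 * r))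
    {v : V} (hv : v ∈ H.verts) (hdeg : 3 ≤ H.degree v)
    (hdel : 3 * r * (H.deleteVertex v).tau ≤
      (H.deleteVertex v).verts.card + r * (H.deleteVertex v).numEdges) :
    3 * r * H.tau < H.verts.card + r * H.numEdges := by
  have htau := Nat.mul_le_mul_left (3 * r)
    (tau_le_tau_deleteVertex_add_one hv (edge_nonempty_of_uniform huni (by omega)))
  have hverts := card_verts_deleteVertex_add_one hv
  have hedges := congrArg (r * ·) (H.numEdges_deleteVertex_add_degree v)
  have := Nat.mul_le_mul_left r hdeg
  linarith

theorem three_mul_tau_le {r : ℕ} (hr : 0 < r) (huni : H.Uniform (2 * r)) :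
    3 * r * H.tau ≤ H.verts.card + r * H.numEdges := by
  induction hm : H.numEdges using Nat.strong_induction_on generalizing H with
  | _ m ih =>
    by_cases hdeg : ∀ v ∈ H.verts, H.degree v ≤ 2
    · exact hm ▸ three_mul_tau_le_of_degree_le_two hr huni hdeg
    push Not at hdeg
    obtain ⟨v, hv, hdeg⟩ := hdeg
    have hlt : (H.deleteVertex v).numEdges < m := by
      have := H.numEdges_deleteVertex_add_degree v
      omega
    exact hm ▸ (three_mul_tau_lt_of_three_le_degree hr huni hv hdeg
      (ih _ hlt (deleteVertex_uniform huni) rfl)).le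

end FinHypergraph

/-- For even `k ≥ 2`, a `k`-uniform hypergraph achieving equality in the
Chvátal–McDiarmid bound has maximum degree at most `2`. -/
theorem stmt11 {V : Type*} [DecidableEq V] (k n m : ℕ) (hk : 2 ≤ k)
    (hke : Even k) (H : FinHypergraph V) (huni : H.Uniform k)
    (hn : H.verts.card = n) (hm : H.numEdges = m)
    (heq : (H.tau : ℚ) = ((n : ℚ) + ((k / 2 : ℕ) : ℚ) * (m : ℚ)) / ((3 * k / 2 : ℕ) : ℚ)) :
    ∀ v ∈ H.verts, H.degree v ≤ 2 := by
  obtain ⟨r, rfl⟩ := hke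
  subst hn hm
  have hr : 0 < r := by omega
  have huni' : H.Uniform (2 * r) := two_mul r ▸ huni
  have hextremal : 3 * r * H.tau = H.verts.card + r * H.numEdges := by
    rw [show (r + r) / 2 = r by omega, show 3 * (r + r) / 2 = 3 * r by omega,
      eq_div_iff (by positivity)] at heq
    have hq : ((3 * r * H.tau : ℕ) : ℚ) = ((H.verts.card + r * H.numEdges : ℕ) : ℚ) := by
      push_cast at heq ⊢
      linarith
    exact_mod_cast hq
  intro v hv
  by_contra! hdeg
  have := FinHypergraph.three_mul_tau_lt_of_three_le_degree hr huni' hv hdeg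
    (FinHypergraph.three_mul_tau_le hr (FinHypergraph.deleteVertex_uniform huni'))
  omega
end
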